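/- arXiv:0808.1742 — 5 statements merged into one kernel-verified Lean document; each statement's English description precedes it below -/
import Mathlib

section
/- Let Λ ⊂ ℤ² be a finite set with the closure property: whenever (n₁,n₂,n₃) ∈ Γ_res(n) and n₁, n₂, n₃ ∈ Λ, then n ∈ Λ. Let T > 0 and let r : [0,T] → ℓ¹(ℤ²; ℂ) be a continuously differentiable solution of the resonant system RFNLS such that r_n(0) = 0 for all n ∉ Λ. Then r_n(t) = 0 for all n ∉ Λ and all t ∈ [0,T]. -/
open scoped BigOperators ENNReal

noncomputable section

/-- The squared Euclidean length of a lattice point `n ∈ ℤ²`. -/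
def nsq (n : ℤ × ℤ) : ℤ := n.1 ^ 2 + n.2 ^ 2

/-- The set `Γ(n)` of non-self interactions at frequency `n`. -/
def Gam (n : ℤ × ℤ) : Set ((ℤ × ℤ) × (ℤ × ℤ) × (ℤ × ℤ)) :=
  {p | p.1 - p.2.1 + p.2.2 = n ∧ p.1 ≠ n ∧ p.2.2 ≠ n}

/-- `ω₄ = |n₁|² − |n₂|² + |n₃|² − |n|²`. -/
def omega4 (n : ℤ × ℤ) (p : (ℤ × ℤ) × (ℤ × ℤ) × (ℤ × ℤ)) : ℤ :=
  nsq p.1 - nsq p.2.1 + nsq p.2.2 - nsq n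

/-- The set `Γ_res(n)` of resonant non-self interactions at frequency `n`. -/
def GamRes (n : ℤ × ℤ) : Set ((ℤ × ℤ) × (ℤ × ℤ) × (ℤ × ℤ)) :=
  {p | p ∈ Gam n ∧ omega4 n p = 0}

/-- The right-hand side of the resonant system `RFNLS` (after multiplying by `i`
it is the derivative): `−r_n |r_n|² + Σ_{Γ_res(n)} r_{n₁} conj(r_{n₂}) r_{n₃}`. -/
def resRHS (r : (ℤ × ℤ) → ℂ) (n : ℤ × ℤ) : ℂ :=
  -(r n * ((‖r n‖ : ℝ) : ℂ) ^ 2) +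
    ∑' p : GamRes n, r (↑p : (ℤ × ℤ) × (ℤ × ℤ) × (ℤ × ℤ)).1 *
      (starRingEnd ℂ) (r (↑p : (ℤ × ℤ) × (ℤ × ℤ) × (ℤ × ℤ)).2.1) *
      r (↑p : (ℤ × ℤ) × (ℤ × ℤ) × (ℤ × ℤ)).2.2

/-- `r` is a continuously differentiable solution of `RFNLS`,
`−i ∂ₜ r_n = −r_n|r_n|² + Σ_{Γ_res(n)} r_{n₁} conj(r_{n₂}) r_{n₃}`, on the set `S`. -/
def IsRFNLSSolOn (S : Set ℝ) (r : ℝ → lp (fun _ : ℤ × ℤ => ℂ) 1) : Prop :=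
  ∃ r' : ℝ → lp (fun _ : ℤ × ℤ => ℂ) 1,
    ContinuousOn r' S ∧
    (∀ t ∈ S, HasDerivWithinAt r (r' t) S t) ∧
    (∀ t ∈ S, ∀ n : ℤ × ℤ, -Complex.I * (r' t) n = resRHS (⇑(r t)) n)

/-! Let `P` be the projection of `ℓ¹(ℤ², ℂ)` onto sequences vanishing on `Λ`. By the closure
property, every resonant term `r_{n₁} conj(r_{n₂}) r_{n₃}` contributing to a mode `n ∉ Λ` has a
factor outside `Λ`, and the triples feeding different modes are disjoint, so
`‖P ∂ₜr‖₁ ≤ 4 ‖r‖₁² ‖P r‖₁`. Since `‖r‖₁` is bounded on the compact interval `[0, T]` and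
`P r(0) = 0`, Grönwall's inequality gives `P r ≡ 0`. -/

open scoped lp

namespace lp

theorem enorm_eq_tsum_enorm {α : Type*} {E : α → Type*} [∀ i, NormedAddCommGroup (E i)]
    (f : lp E 1) : ‖f‖ₑ = ∑' i, ‖f i‖ₑ := by
  have hnorm : ‖f‖ = ∑' i, ‖f i‖ := by
    simpa using lp.norm_eq_tsum_rpow (p := 1) (by norm_num) f
  have hsum : Summable fun i => ‖f i‖ := by
    simpa using (lp.memℓp f).summable (p := 1) (by norm_num)
  rw [← ofReal_norm, hnorm, ENNReal.ofReal_tsum_of_nonneg (fun i => norm_nonneg _) hsum]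
  simp only [ofReal_norm]

variable {α 𝕜 E : Type*} [NormedRing 𝕜] [NormedAddCommGroup E] [Module 𝕜 E] [IsBoundedSMul 𝕜 E]
  {p : ℝ≥0∞} [Fact (1 ≤ p)]

variable (𝕜 E p) in
def indicatorCLM (s : Set α) : ℓ^p(α, E) →L[𝕜] ℓ^p(α, E) :=
  LinearMap.mkContinuous
    { toFun f := ⟨s.indicator f, (lp.memℓp f).mono' (norm_indicator_le_norm_self f)⟩
      map_add' f g := lp.ext (s.indicator_add' f g)
      map_smul' c f := lp.ext (s.indicator_const_smul c f) }
    1 fun f => by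
      rw [one_mul]
      exact lp.norm_mono (zero_lt_one.trans_le Fact.out).ne' (norm_indicator_le_norm_self f)

@[simp]
theorem indicatorCLM_apply (s : Set α) (f : ℓ^p(α, E)) (i : α) :
    indicatorCLM 𝕜 E p s f i = s.indicator f i :=
  rfl

end lp

namespace ENNReal

variable {α : Type*}

theorem tsum_mul_tsum_mul_tsum (f g h : α → ℝ≥0∞) :
    (∑' a, f a) * (∑' a, g a) * (∑' a, h a)
      = ∑' q : α × α × α, f q.1 * g q.2.1 * h q.2.2 := by
  simp only [ENNReal.tsum_prod', mul_assoc, ENNReal.tsum_mul_left, ENNReal.tsum_mul_right]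

theorem tsum_indicator_pow_three_le (s : Set α) (e : α → ℝ≥0∞) :
    ∑' a, s.indicator (fun a => e a ^ 3) a ≤ (∑' a, e a) ^ 2 * ∑' a, s.indicator e a := by
  rw [← ENNReal.tsum_mul_left]
  refine ENNReal.tsum_le_tsum fun a => ?_
  have hpow : (fun a => e a ^ 3) = fun a => e a ^ 2 * e a := funext fun a => pow_succ _ _
  rw [hpow, Set.indicator_mul_right]
  gcongr
  exact ENNReal.le_tsum a

theorem tsum_indicator_tsum_mul_mul_le (φ : α × α × α → α) (R : α → Set (α × α × α))
    (hR : ∀ n, R n ⊆ φ ⁻¹' {n}) (s : Set α)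
    (hs : ∀ n ∈ s, ∀ q ∈ R n, q.1 ∈ s ∨ q.2.1 ∈ s ∨ q.2.2 ∈ s) (e : α → ℝ≥0∞) :
    ∑' n, s.indicator (fun n => ∑' q : R n, e q.1.1 * e q.1.2.1 * e q.1.2.2) n
      ≤ 3 * (∑' a, e a) ^ 2 * ∑' a, s.indicator e a := by
  set u := s.indicator e
  set G : α × α × α → ℝ≥0∞ := fun q =>
    u q.1 * e q.2.1 * e q.2.2 + e q.1 * u q.2.1 * e q.2.2 + e q.1 * e q.2.1 * u q.2.2
  have hG : ∀ n ∈ s, ∀ q ∈ R n, e q.1 * e q.2.1 * e q.2.2 ≤ G q := by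
    intro n hn q hq
    rcases hs n hn q hq with h | h | h
    · exact le_add_right (le_add_right (by simp [u, h]))
    · exact le_add_right (le_add_left (by simp [u, h]))
    · exact le_add_left (by simp [u, h])
  calc ∑' n, s.indicator (fun n => ∑' q : R n, e q.1.1 * e q.1.2.1 * e q.1.2.2) n
      ≤ ∑' n, ∑' q : φ ⁻¹' {n}, G q := by
        refine ENNReal.tsum_le_tsum fun n => ?_
        by_cases hn : n ∈ s
        · rw [Set.indicator_of_mem hn]
          exact (ENNReal.tsum_le_tsum fun q : R n => hG n hn q.1 q.2).trans
            (ENNReal.tsum_mono_subtype G (hR n))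
        · simp [hn]
    _ = ∑' q, G q := ENNReal.tsum_fiberwise G φ
    _ = 3 * (∑' a, e a) ^ 2 * ∑' a, u a := by
        simp only [G, ENNReal.tsum_add, ← tsum_mul_tsum_mul_tsum]
        ring

end ENNReal

def ResonantlyClosed (Λ : Set (ℤ × ℤ)) : Prop :=
  ∀ n n₁ n₂ n₃ : ℤ × ℤ, (n₁, n₂, n₃) ∈ GamRes n → n₁ ∈ Λ → n₂ ∈ Λ → n₃ ∈ Λ → n ∈ Λ

theorem enorm_resRHS_le (x : ℤ × ℤ → ℂ) (n : ℤ × ℤ) :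
    ‖resRHS x n‖ₑ ≤ ‖x n‖ₑ ^ 3 + ∑' q : GamRes n,
      ‖x q.1.1‖ₑ * ‖x q.1.2.1‖ₑ * ‖x q.1.2.2‖ₑ := by
  refine (enorm_add_le _ _).trans (add_le_add ?_ ?_)
  · rw [← ofReal_norm, ← ofReal_norm, ← ENNReal.ofReal_pow (norm_nonneg _)]
    refine le_of_eq (congrArg ENNReal.ofReal ?_)
    simp only [norm_neg, norm_mul, norm_pow, Complex.norm_real, norm_norm]
    ring
  · refine enorm_tsum_le_tsum_enorm.trans (ENNReal.tsum_le_tsum fun q => ?_)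
    simp [enorm_mul]

theorem tsum_indicator_enorm_resRHS_le {Λ : Set (ℤ × ℤ)} (hΛ : ResonantlyClosed Λ)
    (x : ℤ × ℤ → ℂ) :
    ∑' n, Λᶜ.indicator (fun n => ‖resRHS x n‖ₑ) n
      ≤ 4 * (∑' n, ‖x n‖ₑ) ^ 2 * ∑' n, Λᶜ.indicator (fun n => ‖x n‖ₑ) n := by
  have hescape : ∀ n ∈ Λᶜ, ∀ q ∈ GamRes n, q.1 ∈ Λᶜ ∨ q.2.1 ∈ Λᶜ ∨ q.2.2 ∈ Λᶜ := by
    intro n hn q hq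
    by_contra! h
    simp only [Set.mem_compl_iff, not_not] at h
    exact hn (hΛ n q.1 q.2.1 q.2.2 hq h.1 h.2.1 h.2.2)
  calc ∑' n, Λᶜ.indicator (fun n => ‖resRHS x n‖ₑ) n
      ≤ ∑' n, (Λᶜ.indicator (fun n => ‖x n‖ₑ ^ 3) n + Λᶜ.indicator (fun n => ∑' q : GamRes n,
          ‖x q.1.1‖ₑ * ‖x q.1.2.1‖ₑ * ‖x q.1.2.2‖ₑ) n) := by
        refine ENNReal.tsum_le_tsum fun n => ?_
        by_cases hn : n ∈ Λᶜ
        · simpa [hn] using enorm_resRHS_le x n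
        · simp [hn]
    _ ≤ 1 * (∑' n, ‖x n‖ₑ) ^ 2 * ∑' n, Λᶜ.indicator (fun n => ‖x n‖ₑ) n
        + 3 * (∑' n, ‖x n‖ₑ) ^ 2 * ∑' n, Λᶜ.indicator (fun n => ‖x n‖ₑ) n := by
        rw [ENNReal.tsum_add, one_mul]
        gcongr
        · exact ENNReal.tsum_indicator_pow_three_le _ _
        · exact ENNReal.tsum_indicator_tsum_mul_mul_le (fun q => q.1 - q.2.1 + q.2.2) GamRes
            (fun n q hq => hq.1.1) Λᶜ hescape _
    _ = 4 * (∑' n, ‖x n‖ₑ) ^ 2 * ∑' n, Λᶜ.indicator (fun n => ‖x n‖ₑ) n := by ring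

theorem norm_indicatorCLM_le_of_resRHS {Λ : Set (ℤ × ℤ)} (hΛ : ResonantlyClosed Λ)
    {x y : ℓ¹(ℤ × ℤ, ℂ)} (hy : ∀ n, -Complex.I * y n = resRHS x n) :
    ‖lp.indicatorCLM ℝ ℂ 1 Λᶜ y‖ ≤ 4 * ‖x‖ ^ 2 * ‖lp.indicatorCLM ℝ ℂ 1 Λᶜ x‖ := by
  have hyx : ∀ n, ‖y n‖ₑ = ‖resRHS x n‖ₑ := fun n => by
    simp [← hy n, enorm_eq_nnnorm]
  have h : ‖lp.indicatorCLM ℝ ℂ 1 Λᶜ y‖ₑ ≤ 4 * ‖x‖ₑ ^ 2 * ‖lp.indicatorCLM ℝ ℂ 1 Λᶜ x‖ₑ := by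
    simp only [lp.enorm_eq_tsum_enorm, lp.indicatorCLM_apply, enorm_indicator_eq_indicator_enorm,
      hyx]
    exact tsum_indicator_enorm_resRHS_le hΛ x
  simp only [enorm_eq_nnnorm] at h
  exact_mod_cast h

theorem stmt3_general (Λ : Finset (ℤ × ℤ))
    (hclosed : ∀ (n n₁ n₂ n₃ : ℤ × ℤ), (n₁, n₂, n₃) ∈ GamRes n →
      n₁ ∈ Λ → n₂ ∈ Λ → n₃ ∈ Λ → n ∈ Λ)
    (T : ℝ)
    (r : ℝ → lp (fun _ : ℤ × ℤ => ℂ) 1)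
    (hsol : IsRFNLSSolOn (Set.Icc 0 T) r)
    (h0 : ∀ n : ℤ × ℤ, n ∉ Λ → (r 0) n = 0) :
    ∀ t ∈ Set.Icc (0:ℝ) T, ∀ n : ℤ × ℤ, n ∉ Λ → (r t) n = 0 := by
  obtain ⟨r', -, hder, heq⟩ := hsol
  set P := lp.indicatorCLM ℝ ℂ 1 (Λ : Set (ℤ × ℤ))ᶜ
  have hr : ContinuousOn r (Set.Icc 0 T) := fun t ht => (hder t ht).continuousWithinAt
  obtain ⟨C, hC⟩ := isCompact_Icc.exists_bound_of_continuousOn hr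
  have hPr : ∀ t ∈ Set.Icc 0 T, P (r t) = 0 := by
    refine eq_zero_of_abs_deriv_le_mul_abs_self_of_eq_zero_right (f' := fun t => P (r' t))
      (K := 4 * C ^ 2) (P.continuous.comp_continuousOn hr) (fun t ht => ?_) ?_ (fun t ht => ?_)
    · exact P.hasFDerivAt.comp_hasDerivWithinAt t
        ((hder t (Set.Ico_subset_Icc_self ht)).mono_of_mem_nhdsWithin (Icc_mem_nhdsGE_of_mem ht))
    · ext n
      by_cases hn : n ∈ Λ <;> simp [P, hn, h0 n]
    · refine (norm_indicatorCLM_le_of_resRHS hclosed (heq t (Set.Ico_subset_Icc_self ht))).trans ?_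
      gcongr
      exact hC t (Set.Ico_subset_Icc_self ht)
  intro t ht n hn
  simpa [P, hn] using congrArg (· n) (hPr t ht)

/-- If `Λ` is closed under resonant interactions and the initial data of a solution of
`RFNLS` is supported in `Λ`, then the solution stays supported in `Λ` for all time. -/
theorem stmt3 (Λ : Finset (ℤ × ℤ))
    (hclosed : ∀ (n n₁ n₂ n₃ : ℤ × ℤ), (n₁, n₂, n₃) ∈ GamRes n →
      n₁ ∈ Λ → n₂ ∈ Λ → n₃ ∈ Λ → n ∈ Λ)
    (T : ℝ) (hT : 0 < T)
    (r : ℝ → lp (fun _ : ℤ × ℤ => ℂ) 1)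
    (hsol : IsRFNLSSolOn (Set.Icc 0 T) r)
    (h0 : ∀ n : ℤ × ℤ, n ∉ Λ → (r 0) n = 0) :
    ∀ t ∈ Set.Icc (0:ℝ) T, ∀ n : ℤ × ℤ, n ∉ Λ → (r t) n = 0 :=
  stmt3_general Λ hclosed T r hsol h0
end
end

section
/- Approximation Lemma: Let 0 < σ < 1 and C₀ ≥ 1. There exist constants B₀ ≥ 2, c > 0 and C > 0 (depending only on σ and C₀) with the following property. Let B ≥ B₀ and 0 < T ≤ c B² log B. Suppose g : [0,T] → ℓ¹(ℤ²; ℂ) is continuously differentiable, g(0) has finite support, and there is a continuous map ℰ : [0,T] → ℓ¹(ℤ²; ℂ) such that −i g′(t) = 𝒩(t)(g(t), g(t), g(t)) + ℰ(t) for all t ∈ [0,T], with ‖g(t)‖_{ℓ¹(ℤ²)} ≤ C₀ B^{−1} and ‖∫₀ᵗ ℰ(s) ds‖_{ℓ¹(ℤ²)} ≤ C₀ B^{−1−σ} for all t ∈ [0,T]. Suppose a : [0,T] → ℓ¹(ℤ²; ℂ) is a continuously differentiable solution of −i a′(t) = 𝒩(t)(a(t), a(t), a(t)) with a(0) = g(0).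 Then ‖a(t) − g(t)‖_{ℓ¹(ℤ²)} ≤ C B^{−1−σ/2} for all t ∈ [0,T]. -/
open scoped BigOperators ENNReal

noncomputable section

/-- The summand `a_{n₁} conj(b_{n₂}) c_{n₃} e^{iω₄ t}`. -/
def Nterm (t : ℝ) (a b c : (ℤ × ℤ) → ℂ) (n : ℤ × ℤ)
    (p : (ℤ × ℤ) × (ℤ × ℤ) × (ℤ × ℤ)) : ℂ :=
  a p.1 * (starRingEnd ℂ) (b p.2.1) * c p.2.2 *
    Complex.exp (Complex.I * (omega4 n p : ℂ) * (t : ℂ))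

/-- The trilinear operator `𝒩(t)(a,b,c)_n`. -/
def Nop (t : ℝ) (a b c : (ℤ × ℤ) → ℂ) (n : ℤ × ℤ) : ℂ :=
  -(a n * (starRingEnd ℂ) (b n) * c n) + ∑' p : Gam n, Nterm t a b c n ↑p

/-! With `u = a - g`, the two equations give `u' + iℰ = i(𝒩(a) - 𝒩(g))`. Every term of
`𝒩(t)(x, y, z)_n`, the diagonal one included, is dominated by the weight
`|x_{n₁}| |y_{n₂}| |z_{n₃}|` of a triple on the plane `n₁ - n₂ + n₃ = n`, and these weights
sum to `‖x‖ ‖y‖ ‖z‖`; so `𝒩` is Lipschitz with constant `K = 3M²` on the `ℓ¹`-ball of radius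
`M = (C₀ + 1) B⁻¹`. Gronwall's inequality for `u + i∫ℰ` then gives
`‖u(t)‖ ≤ C₀ B^{-1-σ} e^{Kt}` for as long as `‖u‖ ≤ B⁻¹`, and for `T ≤ c B² log B` the factor
`e^{KT}` is at most `B^{σ/2}`, which keeps `‖u‖` below `B⁻¹` and closes the bootstrap. -/

local notation "ℓ¹" => lp (fun _ : ℤ × ℤ => ℂ) 1

lemma HasSum.mul_of_nonneg {ι κ : Type*} {f : ι → ℝ} {g : κ → ℝ} {s t : ℝ} (hf : HasSum f s)
    (hg : HasSum g t) (hf0 : 0 ≤ f) (hg0 : 0 ≤ g) :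
    HasSum (fun q : ι × κ => f q.1 * g q.2) (s * t) :=
  hf.mul hg (hf.summable.mul_of_nonneg hg.summable hf0 hg0)

section Trilinear

lemma lp_one_hasSum_norm (x : ℓ¹) : HasSum (fun n => ‖x n‖) ‖x‖ := by
  simpa using lp.hasSum_norm (p := 1) (by norm_num) x

def tripleSum (p : (ℤ × ℤ) × (ℤ × ℤ) × (ℤ × ℤ)) : ℤ × ℤ := p.1 - p.2.1 + p.2.2

def tripleWeight (x y z : ℓ¹) (p : (ℤ × ℤ) × (ℤ × ℤ) × (ℤ × ℤ)) : ℝ :=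
  ‖x p.1‖ * ‖y p.2.1‖ * ‖z p.2.2‖

lemma hasSum_tripleWeight (x y z : ℓ¹) : HasSum (tripleWeight x y z) (‖x‖ * ‖y‖ * ‖z‖) := by
  have hyz := (lp_one_hasSum_norm y).mul_of_nonneg (lp_one_hasSum_norm z)
    (fun _ => norm_nonneg _) (fun _ => norm_nonneg _)
  have hxyz := (lp_one_hasSum_norm x).mul_of_nonneg hyz (fun _ => norm_nonneg _)
    (fun _ => by positivity)
  rw [mul_assoc]
  convert hxyz using 2 with p
  exact mul_assoc ..

def fiberWeight (x y z : ℓ¹) (n : ℤ × ℤ) : ℝ :=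
  ∑' p : tripleSum ⁻¹' {n}, tripleWeight x y z p

lemma hasSum_fiberWeight (x y z : ℓ¹) : HasSum (fiberWeight x y z) (‖x‖ * ‖y‖ * ‖z‖) :=
  (hasSum_tripleWeight x y z).tsum_fiberwise tripleSum

lemma norm_Nterm (t : ℝ) (x y z : ℓ¹) (n : ℤ × ℤ) (p : (ℤ × ℤ) × (ℤ × ℤ) × (ℤ × ℤ)) :
    ‖Nterm t x y z n p‖ = tripleWeight x y z p := by
  rw [Nterm, norm_mul, norm_mul, norm_mul, RCLike.norm_conj, Complex.norm_exp, tripleWeight]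
  simp

lemma summable_Nterm (t : ℝ) (x y z : ℓ¹) (n : ℤ × ℤ) :
    Summable fun p : Gam n => Nterm t x y z n p :=
  .of_norm <| ((hasSum_tripleWeight x y z).summable.subtype (Gam n)).congr fun _ =>
    (norm_Nterm ..).symm

/-- The diagonal term of `Nop` is the weight of `(n, n, n)`, which lies in the fibre over `n`
but not in `Gam n`; so the whole of `Nop` is controlled by a single fibre sum. -/
lemma norm_Nop_le_fiberWeight (t : ℝ) (x y z : ℓ¹) (n : ℤ × ℤ) :
    ‖Nop t x y z n‖ ≤ fiberWeight x y z n := by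
  have hw := (hasSum_tripleWeight x y z).summable
  have hw0 : ∀ p, 0 ≤ tripleWeight x y z p := fun _ => by unfold tripleWeight; positivity
  have hdisj : Disjoint ({(n, n, n)} : Set _) (Gam n) := by simp [Gam]
  have hsub : {(n, n, n)} ∪ Gam n ⊆ tripleSum ⁻¹' {n} := by
    rintro p (rfl | hp)
    · simp [tripleSum]
    · exact hp.1
  calc ‖Nop t x y z n‖
      ≤ tripleWeight x y z (n, n, n) + ∑' p : Gam n, tripleWeight x y z p := by
        refine (norm_add_le _ _).trans (add_le_add ?_ ?_)
        · rw [norm_neg, ← norm_Nterm t x y z n (n, n, n)]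
          simp [Nterm, omega4]
        · refine (norm_tsum_le_tsum_norm ?_).trans_eq (tsum_congr fun p => norm_Nterm ..)
          exact (hw.subtype (Gam n)).congr fun p => (norm_Nterm ..).symm
    _ = ∑' p : ↑({(n, n, n)} ∪ Gam n), tripleWeight x y z p := by
        rw [Summable.tsum_union_disjoint hdisj (hw.subtype _) (hw.subtype _), tsum_singleton]
    _ ≤ fiberWeight x y z n :=
        (hw.subtype _).tsum_le_tsum_of_inj (Set.inclusion hsub) (Set.inclusion_injective hsub)
          (fun _ _ => hw0 _) (fun _ => le_rfl) (hw.subtype _)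

lemma Nop_sub_Nop (t : ℝ) (x y : ℓ¹) (n : ℤ × ℤ) :
    Nop t x x x n - Nop t y y y n =
      Nop t ⇑(x - y) x x n + Nop t y ⇑(x - y) x n + Nop t y y ⇑(x - y) n := by
  have hterm : ∀ p : Gam n, Nterm t x x x n p - Nterm t y y y n p =
      Nterm t ⇑(x - y) x x n p + Nterm t y ⇑(x - y) x n p + Nterm t y y ⇑(x - y) n p := by
    intro p
    simp only [Nterm, lp.coeFn_sub, Pi.sub_apply, map_sub]
    ring
  have hsum : ∑' p : Gam n, Nterm t x x x n p - ∑' p : Gam n, Nterm t y y y n p =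
      ∑' p : Gam n, Nterm t ⇑(x - y) x x n p + ∑' p : Gam n, Nterm t y ⇑(x - y) x n p +
        ∑' p : Gam n, Nterm t y y ⇑(x - y) n p := by
    rw [← (summable_Nterm ..).tsum_sub (summable_Nterm ..),
      ← (summable_Nterm ..).tsum_add (summable_Nterm ..),
      ← ((summable_Nterm ..).add (summable_Nterm ..)).tsum_add (summable_Nterm ..)]
    exact tsum_congr hterm
  simp only [Nop, lp.coeFn_sub, Pi.sub_apply, map_sub] at hsum ⊢
  linear_combination hsum

lemma norm_le_of_apply_eq_Nop_sub (t : ℝ) {x y F : ℓ¹}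
    (hF : ∀ n, F n = Complex.I * (Nop t x x x n - Nop t y y y n)) :
    ‖F‖ ≤ (‖x‖ ^ 2 + ‖y‖ * ‖x‖ + ‖y‖ ^ 2) * ‖x - y‖ := by
  have hmajorant := ((hasSum_fiberWeight (x - y) x x).add
    (hasSum_fiberWeight y (x - y) x)).add (hasSum_fiberWeight y y (x - y))
  refine (hasSum_le (fun n => ?_) (lp_one_hasSum_norm F) hmajorant).trans_eq (by ring)
  rw [hF, norm_mul, Complex.norm_I, one_mul, Nop_sub_Nop]
  exact norm_add₃_le.trans (add_le_add (add_le_add (norm_Nop_le_fiberWeight ..)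
    (norm_Nop_le_fiberWeight ..)) (norm_Nop_le_fiberWeight ..))

end Trilinear

open Set Real Topology

section Bootstrap

lemma forall_lt_of_continuousOn {f : ℝ → ℝ} {a b r : ℝ} (hf : ContinuousOn f (Icc a b))
    (himp : ∀ x ∈ Icc a b, (∀ s ∈ Ico a x, f s ≤ r) → f x < r) :
    ∀ x ∈ Icc a b, f x < r := by
  by_contra! hbad
  set S := Icc a b ∩ f ⁻¹' Ici r
  have hS : IsClosed S := hf.preimage_isClosed_of_isClosed isClosed_Icc isClosed_Ici
  have hne : S.Nonempty := hbad
  have hmem : sInf S ∈ S := hS.csInf_mem hne ⟨a, fun x hx => hx.1.1⟩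
  refine (himp _ hmem.1 fun s hs => ?_).not_ge hmem.2
  by_contra! hs'
  have hsS : s ∈ S := ⟨⟨hs.1, hs.2.le.trans hmem.1.2⟩, hs'.le⟩
  exact (csInf_le ⟨a, fun x hx => hx.1.1⟩ hsS).not_gt hs.2

variable {F : Type*} [NormedAddCommGroup F] [NormedSpace ℝ F] [CompleteSpace F]

lemma hasDerivWithinAt_primitive_Ici {e : ℝ → F} {T x : ℝ} (he : ContinuousOn e (Icc 0 T))
    (hx : x ∈ Ico 0 T) : HasDerivWithinAt (fun t => ∫ s in 0..t, e s) (e x) (Ici x) x := by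
  have hmem : Icc 0 T ∈ 𝓝[Ioi x] x :=
    nhdsWithin_mono x Ioi_subset_Ici_self (Icc_mem_nhdsGE_of_mem hx)
  refine intervalIntegral.integral_hasDerivWithinAt_right ?_
    ⟨Icc 0 T, hmem, he.aestronglyMeasurable measurableSet_Icc⟩
    ((he x (Ico_subset_Icc_self hx)).mono_of_mem_nhdsWithin hmem)
  exact (he.mono (by rw [uIcc_of_le hx.1]; exact Icc_subset_Icc_right hx.2.le)).intervalIntegrable

/-- Gronwall's inequality applied to `u + ∫ e`, so that only the primitive of the forcing `e`
enters the bound. -/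
lemma norm_le_mul_exp_of_forcing {u u' e : ℝ → F} {T K δ : ℝ} (hK : 0 ≤ K)
    (hu : ∀ t ∈ Icc 0 T, HasDerivWithinAt u (u' t) (Icc 0 T) t) (hu0 : u 0 = 0)
    (he : ContinuousOn e (Icc 0 T)) (hδ : ∀ t ∈ Icc 0 T, ‖∫ s in 0..t, e s‖ ≤ δ)
    (hbound : ∀ t ∈ Ico 0 T, ‖u' t + e t‖ ≤ K * ‖u t‖) :
    ∀ t ∈ Icc 0 T, ‖u t‖ ≤ δ * exp (K * t) := by
  set v := fun t => u t + ∫ s in 0..t, e s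
  have hv : ContinuousOn v (Icc 0 T) := by
    refine ContinuousOn.add (fun t ht => (hu t ht).continuousWithinAt) ?_
    rcases le_or_gt 0 T with hT | hT
    · rw [← uIcc_of_le hT] at he ⊢
      exact intervalIntegral.continuousOn_primitive_interval he.integrableOn_uIcc
    · simp [Icc_eq_empty_of_lt hT]
  have hv' : ∀ t ∈ Ico 0 T, HasDerivWithinAt v (u' t + e t) (Ici t) t := fun t ht =>
    ((hu t (Ico_subset_Icc_self ht)).mono_of_mem_nhdsWithin
      (Icc_mem_nhdsGE_of_mem ht)).add (hasDerivWithinAt_primitive_Ici he ht)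
  have hsplit : ∀ t ∈ Icc 0 T, ‖u t‖ ≤ ‖v t‖ + δ := fun t ht => by
    simpa [v] using norm_sub_le_of_le (le_refl ‖v t‖) (hδ t ht)
  have hgron := norm_le_gronwallBound_of_norm_deriv_right_le hv hv' (δ := 0) (ε := K * δ)
    (by simp [v, hu0])
    (fun t ht => (hbound t ht).trans <| by
      have := hsplit t (Ico_subset_Icc_self ht); nlinarith)
  intro t ht
  have hvt := hgron t ht
  rcases hK.eq_or_lt with rfl | hKpos
  · simpa [gronwallBound_K0] using (hsplit t ht).trans (by simpa [gronwallBound_K0] using hvt)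
  · rw [gronwallBound_of_K_ne_0 hKpos.ne'] at hvt
    simp only [zero_mul, zero_add, sub_zero, mul_div_cancel_left₀ _ hKpos.ne'] at hvt
    linarith [hsplit t ht]

lemma norm_le_mul_exp_of_local_bound {u u' e : ℝ → F} {T K δ r : ℝ} (hK : 0 ≤ K)
    (hu : ∀ t ∈ Icc 0 T, HasDerivWithinAt u (u' t) (Icc 0 T) t) (hu0 : u 0 = 0)
    (he : ContinuousOn e (Icc 0 T)) (hδ : ∀ t ∈ Icc 0 T, ‖∫ s in 0..t, e s‖ ≤ δ)
    (hloc : ∀ t ∈ Icc 0 T, ‖u t‖ ≤ r → ‖u' t + e t‖ ≤ K * ‖u t‖)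
    (hr : δ * exp (K * T) < r) :
    ∀ t ∈ Icc 0 T, ‖u t‖ ≤ δ * exp (K * t) := by
  have hsmall : ∀ t ∈ Icc 0 T, ‖u t‖ < r := by
    refine forall_lt_of_continuousOn (fun t ht => (hu t ht).continuousWithinAt.norm)
      fun x hx hpast => ?_
    have hsub : Icc 0 x ⊆ Icc 0 T := Icc_subset_Icc_right hx.2
    have hδ0 : 0 ≤ δ := by simpa using hδ 0 ⟨le_rfl, hx.1.trans hx.2⟩
    calc ‖u x‖ ≤ δ * exp (K * x) :=
          norm_le_mul_exp_of_forcing hK (fun t ht => (hu t (hsub ht)).mono hsub) hu0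
            (he.mono hsub) (fun t ht => hδ t (hsub ht))
            (fun t ht => hloc t (hsub (Ico_subset_Icc_self ht)) (hpast t ht)) x ⟨hx.1, le_rfl⟩
      _ ≤ δ * exp (K * T) := by gcongr; exact hx.2
      _ < r := hr
  exact norm_le_mul_exp_of_forcing hK hu hu0 he hδ fun t ht =>
    hloc t (Ico_subset_Icc_self ht) (hsmall t (Ico_subset_Icc_self ht)).le

end Bootstrap

lemma norm_sub_add_smul_le_of_Nop {t M : ℝ} {x y x' y' e : ℓ¹}
    (hx' : ∀ n, -Complex.I * x' n = Nop t x x x n)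
    (hy' : ∀ n, -Complex.I * y' n = Nop t y y y n + e n) (hx : ‖x‖ ≤ M) (hy : ‖y‖ ≤ M) :
    ‖x' - y' + Complex.I • e‖ ≤ 3 * M ^ 2 * ‖x - y‖ := by
  have hF : ∀ n, (x' - y' + Complex.I • e) n =
      Complex.I * (Nop t x x x n - Nop t y y y n) := fun n => by
    simp only [lp.coeFn_add, lp.coeFn_sub, lp.coeFn_smul, Pi.add_apply, Pi.sub_apply,
      Pi.smul_apply, smul_eq_mul]
    linear_combination Complex.I * hx' n - Complex.I * hy' n + (x' n - y' n) * Complex.I_sq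
  refine (norm_le_of_apply_eq_Nop_sub t hF).trans (mul_le_mul_of_nonneg_right ?_ (norm_nonneg _))
  nlinarith [norm_nonneg x, norm_nonneg y]

lemma rpow_mul_exp_le_rpow_add {B x α β : ℝ} (hB : 0 < B) (hx : x ≤ β * log B) :
    B ^ α * exp x ≤ B ^ (α + β) := by
  rw [rpow_add hB, rpow_def_of_pos hB β, mul_comm (log B)]
  gcongr

lemma mul_rpow_sub_lt_rpow {B C α β : ℝ} (hB : 0 < B) (hC : C < B ^ β) :
    C * B ^ (α - β) < B ^ α := by
  rw [rpow_sub hB, ← mul_div_assoc, div_lt_iff₀ (rpow_pos_of_pos hB β), mul_comm]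
  exact mul_lt_mul_of_pos_left hC (rpow_pos_of_pos hB α)

theorem stmt5_general (σ C₀ : ℝ) (hσ0 : 0 < σ) (hC₀ : 1 ≤ C₀) :
    ∃ B₀ c C : ℝ, 2 ≤ B₀ ∧ 0 < c ∧ 0 < C ∧
      ∀ B : ℝ, B₀ ≤ B → ∀ T : ℝ, 0 < T → T ≤ c * B ^ 2 * Real.log B →
      ∀ g g' E : ℝ → lp (fun _ : ℤ × ℤ => ℂ) 1,
        (Function.support (⇑(g 0))).Finite →
        ContinuousOn g' (Set.Icc 0 T) →
        ContinuousOn E (Set.Icc 0 T) →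
        (∀ t ∈ Set.Icc (0:ℝ) T, HasDerivWithinAt g (g' t) (Set.Icc 0 T) t) →
        (∀ t ∈ Set.Icc (0:ℝ) T, ∀ n : ℤ × ℤ,
          -Complex.I * (g' t) n = Nop t (⇑(g t)) (⇑(g t)) (⇑(g t)) n + (E t) n) →
        (∀ t ∈ Set.Icc (0:ℝ) T, ‖g t‖ ≤ C₀ * B ^ (-1 : ℝ)) →
        (∀ t ∈ Set.Icc (0:ℝ) T, ‖∫ s in (0:ℝ)..t, E s‖ ≤ C₀ * B ^ (-1 - σ)) →
      ∀ a a' : ℝ → lp (fun _ : ℤ × ℤ => ℂ) 1,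
        a 0 = g 0 →
        ContinuousOn a' (Set.Icc 0 T) →
        (∀ t ∈ Set.Icc (0:ℝ) T, HasDerivWithinAt a (a' t) (Set.Icc 0 T) t) →
        (∀ t ∈ Set.Icc (0:ℝ) T, ∀ n : ℤ × ℤ,
          -Complex.I * (a' t) n = Nop t (⇑(a t)) (⇑(a t)) (⇑(a t)) n) →
        ∀ t ∈ Set.Icc (0:ℝ) T, ‖a t - g t‖ ≤ C * B ^ (-1 - σ / 2) := by
  have hC₀pow : 0 ≤ C₀ ^ (σ / 2)⁻¹ := rpow_nonneg (by linarith) _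
  refine ⟨2 + C₀ ^ (σ / 2)⁻¹, σ / (6 * (C₀ + 1) ^ 2), C₀, by linarith, by positivity,
    by linarith, ?_⟩
  intro B hB T hT hTB g g' E _ _ hE hg hgeq hgbd hEbd a a' ha0 _ ha haeq
  have hB0 : 0 < B := by linarith
  set M := (C₀ + 1) * B ^ (-1 : ℝ)
  have hgM : ∀ t ∈ Icc 0 T, ‖g t‖ + B ^ (-1 : ℝ) ≤ M := fun t ht => by
    linarith [hgbd t ht]
  have hBσ : C₀ < B ^ (σ / 2) :=
    (rpow_inv_lt_iff_of_pos (by linarith) hB0.le (by positivity)).1 (by linarith)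
  have hKT : 3 * M ^ 2 * T ≤ σ / 2 * log B := by
    have hM : M ^ 2 = (C₀ + 1) ^ 2 / B ^ 2 := by simp only [M, rpow_neg_one]; field_simp
    calc 3 * M ^ 2 * T ≤ 3 * M ^ 2 * (σ / (6 * (C₀ + 1) ^ 2) * B ^ 2 * log B) := by gcongr
      _ = σ / 2 * log B := by rw [hM]; field_simp; ring
  have hloc : ∀ t ∈ Icc 0 T, ‖a t - g t‖ ≤ B ^ (-1 : ℝ) →
      ‖(a' t - g' t) + Complex.I • E t‖ ≤ 3 * M ^ 2 * ‖a t - g t‖ := fun t ht hclose =>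
    norm_sub_add_smul_le_of_Nop (haeq t ht) (hgeq t ht)
      (by linarith [norm_le_insert' (a t) (g t), hgM t ht])
      (by linarith [hgM t ht, rpow_pos_of_pos hB0 (-1)])
  have hdecay : C₀ * B ^ (-1 - σ) * exp (3 * M ^ 2 * T) ≤ C₀ * B ^ (-1 - σ / 2) := by
    rw [mul_assoc]
    gcongr
    exact (rpow_mul_exp_le_rpow_add hB0 hKT).trans_eq (by congr 1; ring)
  have hclose := norm_le_mul_exp_of_local_bound (u := fun t => a t - g t)
    (e := fun t => Complex.I • E t) (by positivity) (fun t ht => (ha t ht).sub (hg t ht))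
    (by simp [ha0]) (by exact hE.const_smul Complex.I)
    (fun t ht => by simpa [intervalIntegral.integral_smul, norm_smul] using hEbd t ht) hloc
    (hdecay.trans_lt (mul_rpow_sub_lt_rpow hB0 hBσ))
  intro t ht
  calc ‖a t - g t‖ ≤ C₀ * B ^ (-1 - σ) * exp (3 * M ^ 2 * t) := hclose t ht
    _ ≤ C₀ * B ^ (-1 - σ) * exp (3 * M ^ 2 * T) := by gcongr; exact ht.2
    _ ≤ C₀ * B ^ (-1 - σ / 2) := hdecay

/-- Approximation Lemma: a solution `g` of `FNLS` with error term `ℰ` obeying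
`‖g(t)‖_{ℓ¹} ≲ B⁻¹` and `‖∫₀ᵗ ℰ‖_{ℓ¹} ≲ B^{−1−σ}` stays `B^{−1−σ/2}`-close in `ℓ¹`
to the genuine `FNLS` evolution of the same initial data, for times `T ≲ B² log B`. -/
theorem stmt5 (σ C₀ : ℝ) (hσ0 : 0 < σ) (hσ1 : σ < 1) (hC₀ : 1 ≤ C₀) :
    ∃ B₀ c C : ℝ, 2 ≤ B₀ ∧ 0 < c ∧ 0 < C ∧
      ∀ B : ℝ, B₀ ≤ B → ∀ T : ℝ, 0 < T → T ≤ c * B ^ 2 * Real.log B →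
      ∀ g g' E : ℝ → lp (fun _ : ℤ × ℤ => ℂ) 1,
        (Function.support (⇑(g 0))).Finite →
        ContinuousOn g' (Set.Icc 0 T) →
        ContinuousOn E (Set.Icc 0 T) →
        (∀ t ∈ Set.Icc (0:ℝ) T, HasDerivWithinAt g (g' t) (Set.Icc 0 T) t) →
        (∀ t ∈ Set.Icc (0:ℝ) T, ∀ n : ℤ × ℤ,
          -Complex.I * (g' t) n = Nop t (⇑(g t)) (⇑(g t)) (⇑(g t)) n + (E t) n) →
        (∀ t ∈ Set.Icc (0:ℝ) T, ‖g t‖ ≤ C₀ * B ^ (-1 : ℝ)) →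
        (∀ t ∈ Set.Icc (0:ℝ) T, ‖∫ s in (0:ℝ)..t, E s‖ ≤ C₀ * B ^ (-1 - σ)) →
      ∀ a a' : ℝ → lp (fun _ : ℤ × ℤ => ℂ) 1,
        a 0 = g 0 →
        ContinuousOn a' (Set.Icc 0 T) →
        (∀ t ∈ Set.Icc (0:ℝ) T, HasDerivWithinAt a (a' t) (Set.Icc 0 T) t) →
        (∀ t ∈ Set.Icc (0:ℝ) T, ∀ n : ℤ × ℤ,
          -Complex.I * (a' t) n = Nop t (⇑(a t)) (⇑(a t)) (⇑(a t)) n) →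
        ∀ t ∈ Set.Icc (0:ℝ) T, ‖a t - g t‖ ≤ C * B ^ (-1 - σ / 2) :=
  stmt5_general σ C₀ hσ0 hC₀
end
end

section
/- For every b⁰ ∈ ℓ²(ℤ; ℂ) there exists a unique continuously differentiable curve b : ℝ → ℓ²(ℤ; ℂ) with b(0) = b⁰ solving the Toy Model System on ℓ²(ℤ); moreover the ℓ² norm is conserved: ‖b(t)‖_{ℓ²(ℤ)} = ‖b⁰‖_{ℓ²(ℤ)} for all t ∈ ℝ. -/
/-! If `‖x‖, ‖y‖ ≤ M`, each coordinate of `toyF x - toyF y` is bounded by `M²` times the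
differences of `x` and `y` at the sites `j - 1, j, j + 1` (as `‖·‖_∞ ≤ ‖·‖₂`), so the vector field
is Lipschitz on balls of `ℓ²(ℤ)`.
Precomposing with the radial retraction onto a ball of radius `R > ‖b⁰‖` gives a bounded, globally
Lipschitz field, and its Picard–Lindelöf solutions on `[-n, n]` glue to a global solution.

The `ℓ²` norm is conserved because `Re ⟪x, toyF x⟫ = 0`: the real part of
`conj (x j) * toyF x j` is a difference `Φ (j - 1) - Φ j` of a summable flux `Φ`, so the sum
telescopes. The retraction only rescales `x` by a real factor, so the truncated flow conserves the
norm too; it therefore never leaves the ball, where it solves the toy system. Any other solution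
also conserves the norm, hence solves the truncated equation, and the global Lipschitz bound gives
uniqueness. -/

open scoped BigOperators ENNReal

noncomputable section

/-- The right-hand side of the Toy Model System on `ℓ²(ℤ)`:
`−i|b_j|² b_j + 2i conj(b_j)(b_{j−1}² + b_{j+1}²)`. -/
def toyRHSZ (b : ℤ → ℂ) (j : ℤ) : ℂ :=
  -Complex.I * (‖b j‖ : ℂ) ^ 2 * b j +
    2 * Complex.I * (starRingEnd ℂ) (b j) * (b (j - 1) ^ 2 + b (j + 1) ^ 2)

/-- `b : ℝ → ℓ²(ℤ;ℂ)` is a continuously differentiable global solution of the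
Toy Model System. -/
def IsToyL2Sol (b : ℝ → lp (fun _ : ℤ => ℂ) 2) : Prop :=
  ∃ b' : ℝ → lp (fun _ : ℤ => ℂ) 2,
    Continuous b' ∧
    (∀ t : ℝ, HasDerivAt b (b' t) t) ∧
    (∀ (t : ℝ) (j : ℤ), (b' t) j = toyRHSZ (⇑(b t)) j)

open scoped NNReal Topology lp ComplexConjugate
open Set Metric

section ODE

variable {E : Type*} [NormedAddCommGroup E] [NormedSpace ℝ E] [CompleteSpace E]
  {v : E → E} {K C : ℝ≥0}

theorem exists_forall_mem_Ioo_hasDerivAt_of_lipschitzWith (hv : LipschitzWith K v)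
    (hC : ∀ x, ‖v x‖ ≤ C) (x₀ : E) (n : ℕ) :
    ∃ f : ℝ → E, f 0 = x₀ ∧ ∀ t ∈ Ioo (-n : ℝ) n, HasDerivAt f (v (f t)) t := by
  have h0 : (0 : ℝ) ∈ Icc (-n : ℝ) n := ⟨by simp, by simp⟩
  have hpl : IsPicardLindelof (fun _ ↦ v) (⟨0, h0⟩ : Icc (-n : ℝ) n) x₀ (C * n) 0 C K :=
    .of_time_independent (fun x _ ↦ hC x) hv.lipschitzOnWith (by simp)
  obtain ⟨f, hf0, hf⟩ := hpl.exists_eq_forall_mem_Icc_hasDerivWithinAt₀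
  exact ⟨f, hf0, fun t ht ↦
    (hf t (Ioo_subset_Icc_self ht)).hasDerivAt (Icc_mem_nhds ht.1 ht.2)⟩

theorem exists_forall_hasDerivAt_of_lipschitzWith (hv : LipschitzWith K v)
    (hC : ∀ x, ‖v x‖ ≤ C) (x₀ : E) :
    ∃ f : ℝ → E, f 0 = x₀ ∧ ∀ t, HasDerivAt f (v (f t)) t := by
  choose f hf0 hf using exists_forall_mem_Ioo_hasDerivAt_of_lipschitzWith hv hC x₀
  have hagree {m n : ℕ} (hmn : m ≤ n) : EqOn (f m) (f n) (Ioo (-m : ℝ) m) := by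
    have hsub : Ioo (-m : ℝ) m ⊆ Ioo (-n : ℝ) n :=
      Ioo_subset_Ioo (by simpa using hmn) (by simpa using hmn)
    intro t ht
    refine ODE_solution_unique_of_mem_Ioo (v := fun _ ↦ v) (s := fun _ ↦ univ)
      (fun _ _ ↦ hv.lipschitzOnWith) (t₀ := 0) ⟨?_, ?_⟩ (fun s hs ↦ ⟨hf m s hs, trivial⟩)
      (fun s hs ↦ ⟨hf n s (hsub hs), trivial⟩) ((hf0 m).trans (hf0 n).symm) ht
    · linarith [ht.1, ht.2]
    · linarith [ht.1, ht.2]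
  let N : ℝ → ℕ := fun t ↦ ⌊|t|⌋₊ + 1
  have hN (t : ℝ) : t ∈ Ioo (-(N t : ℝ)) (N t) := by
    have := Nat.lt_floor_add_one |t|
    exact abs_lt.mp (by simpa [N] using this)
  refine ⟨fun t ↦ f (N t) t, hf0 _, fun t ↦ ?_⟩
  have hloc : (fun s ↦ f (N s) s) =ᶠ[𝓝 t] f (N t) := by
    filter_upwards [Ioo_mem_nhds (hN t).1 (hN t).2] with s hs
    have hle : N s ≤ N t := Nat.succ_le_of_lt ((Nat.floor_lt (abs_nonneg s)).mpr (abs_lt.mpr hs))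
    exact hagree hle (hN s)
  exact (hf _ t (hN t)).congr_of_eventuallyEq hloc

end ODE

section Conservation

variable {𝕜 E : Type*} [RCLike 𝕜] [NormedAddCommGroup E] [InnerProductSpace 𝕜 E]
  [NormedSpace ℝ E]

theorem norm_eq_of_forall_re_inner_eq_zero {f f' : ℝ → E} (hf : ∀ t, HasDerivAt f (f' t) t)
    (h : ∀ t, RCLike.re (inner 𝕜 (f t) (f' t)) = 0) (t : ℝ) : ‖f t‖ = ‖f 0‖ := by
  have hderiv (s : ℝ) : HasDerivAt (fun τ ↦ inner 𝕜 (f τ) (f τ)) 0 s := by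
    convert (hf s).inner 𝕜 (hf s) using 1
    rw [← inner_conj_symm (f' s), RCLike.add_conj, h, RCLike.ofReal_zero, mul_zero]
  have hconst := is_const_of_deriv_eq_zero (fun s ↦ (hderiv s).differentiableAt)
    (fun s ↦ (hderiv s).deriv) t 0
  simp only [inner_self_eq_norm_sq_to_K] at hconst
  exact (sq_eq_sq₀ (norm_nonneg _) (norm_nonneg _)).mp (by exact_mod_cast hconst)

end Conservation

section RadialRetraction

variable {E : Type*} [SeminormedAddCommGroup E] [NormedSpace ℝ E] {R : ℝ}

def radialRetraction (R : ℝ) (x : E) : E := (R / max R ‖x‖) • x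

lemma radialRetraction_of_norm_le (hR : 0 < R) {x : E} (hx : ‖x‖ ≤ R) :
    radialRetraction R x = x := by
  rw [radialRetraction, max_eq_left hx, div_self hR.ne', one_smul]

lemma norm_radialRetraction_le (hR : 0 < R) (x : E) : ‖radialRetraction R x‖ ≤ R := by
  have hM : 0 < max R ‖x‖ := hR.trans_le (le_max_left _ _)
  rw [radialRetraction, norm_smul, Real.norm_of_nonneg (by positivity), div_mul_eq_mul_div,
    div_le_iff₀ hM]
  exact mul_le_mul_of_nonneg_left (le_max_right _ _) hR.le

lemma lipschitzWith_radialRetraction (hR : 0 < R) :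
    LipschitzWith 2 (radialRetraction R : E → E) := by
  refine LipschitzWith.of_dist_le_mul fun x y ↦ ?_
  rw [dist_eq_norm, dist_eq_norm]
  set Mx := max R ‖x‖
  set My := max R ‖y‖
  have hMx : 0 < Mx := hR.trans_le (le_max_left _ _)
  have hMy : 0 < My := hR.trans_le (le_max_left _ _)
  have hdiff : |Mx - My| ≤ ‖x - y‖ := by
    simpa only [Mx, My, max_comm R] using
      (abs_max_sub_max_le_abs ‖x‖ ‖y‖ R).trans (abs_norm_sub_norm_le x y)
  have h1 : ‖(R / Mx) • (x - y)‖ ≤ ‖x - y‖ := by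
    rw [norm_smul, Real.norm_of_nonneg (by positivity)]
    exact mul_le_of_le_one_left (norm_nonneg _) ((div_le_one hMx).mpr (le_max_left _ _))
  have h2 : ‖(R / Mx - R / My) • y‖ ≤ ‖x - y‖ := by
    have e : R / Mx - R / My = R * (My - Mx) / (Mx * My) := by field_simp
    rw [norm_smul, e, Real.norm_eq_abs, abs_div, abs_mul, abs_of_pos hR,
      abs_of_pos (mul_pos hMx hMy), abs_sub_comm, div_mul_eq_mul_div,
      div_le_iff₀ (mul_pos hMx hMy)]
    calc R * |Mx - My| * ‖y‖ ≤ Mx * ‖x - y‖ * My := by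
          gcongr
          · exact le_max_left _ _
          · exact le_max_right _ _
      _ = ‖x - y‖ * (Mx * My) := by ring
  calc ‖radialRetraction R x - radialRetraction R y‖
      = ‖(R / Mx) • (x - y) + (R / Mx - R / My) • y‖ := by
        simp only [radialRetraction, smul_sub, sub_smul, Mx, My]
        abel_nf
    _ ≤ ‖x - y‖ + ‖x - y‖ := (norm_add_le _ _).trans (add_le_add h1 h2)
    _ = (2 : ℝ≥0) * ‖x - y‖ := by push_cast; ring

end RadialRetraction

section Shift

variable {E F : Type*} [NormedAddCommGroup E] [NormedAddCommGroup F]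

def normShift (k : ℤ) (x : ℓ²(ℤ, E)) : ℓ²(ℤ, ℝ) :=
  ⟨fun j ↦ ‖x (j + k)‖, (memℓp_gen_iff (by norm_num)).mpr <| by
    simpa [Function.comp_def] using
      (Equiv.addRight k).summable_iff.mpr ((lp.memℓp x).summable (by norm_num))⟩

@[simp] lemma normShift_apply (k j : ℤ) (x : ℓ²(ℤ, E)) : normShift k x j = ‖x (j + k)‖ := rfl

@[simp] lemma norm_normShift (k : ℤ) (x : ℓ²(ℤ, E)) : ‖normShift k x‖ = ‖x‖ := by
  have hp : 0 < (2 : ℝ≥0∞).toReal := by norm_num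
  rw [lp.norm_eq_tsum_rpow hp, lp.norm_eq_tsum_rpow hp]
  congr 1
  simpa [Function.comp_def] using (Equiv.addRight k).tsum_eq fun j ↦ ‖x j‖ ^ (2 : ℝ≥0∞).toReal

variable (a b c : ℝ) (x : ℓ²(ℤ, E))

def shiftMajorant : ℓ²(ℤ, ℝ) := a • normShift (-1) x + b • normShift 0 x + c • normShift 1 x

lemma shiftMajorant_apply (j : ℤ) :
    shiftMajorant a b c x j = a * ‖x (j - 1)‖ + b * ‖x j‖ + c * ‖x (j + 1)‖ := by
  simp only [shiftMajorant, lp.coeFn_add, lp.coeFn_smul, Pi.add_apply, Pi.smul_apply,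
    normShift_apply, smul_eq_mul, add_zero, sub_eq_add_neg]

variable {a b c x}

lemma memℓp_of_norm_le_shiftMajorant {f : ℤ → F} (h : ∀ j, ‖f j‖ ≤ shiftMajorant a b c x j) :
    Memℓp f 2 :=
  (lp.memℓp _).mono h

lemma norm_le_of_norm_le_shiftMajorant {f : ℓ²(ℤ, F)} (ha : 0 ≤ a) (hb : 0 ≤ b) (hc : 0 ≤ c)
    (h : ∀ j, ‖f j‖ ≤ shiftMajorant a b c x j) : ‖f‖ ≤ (a + b + c) * ‖x‖ := by
  refine (lp.norm_mono two_ne_zero fun j ↦ (h j).trans (Real.le_norm_self _)).trans <|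
    norm_add₃_le.trans_eq ?_
  simp [norm_smul, abs_of_nonneg ha, abs_of_nonneg hb, abs_of_nonneg hc]
  ring

end Shift

lemma norm_mul_mul_sub_mul_mul_le {R : Type*} [SeminormedRing R] {a b c a' b' c' : R} {M : ℝ}
    (hb : ‖b‖ ≤ M) (hc : ‖c‖ ≤ M) (ha' : ‖a'‖ ≤ M) (hb' : ‖b'‖ ≤ M) :
    ‖a * b * c - a' * b' * c'‖ ≤ M ^ 2 * (‖a - a'‖ + ‖b - b'‖ + ‖c - c'‖) := by
  have hM : 0 ≤ M := (norm_nonneg b).trans hb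
  calc ‖a * b * c - a' * b' * c'‖
      = ‖(a - a') * b * c + a' * (b - b') * c + a' * b' * (c - c')‖ := by noncomm_ring
    _ ≤ ‖(a - a') * b * c‖ + ‖a' * (b - b') * c‖ + ‖a' * b' * (c - c')‖ := norm_add₃_le
    _ ≤ ‖a - a'‖ * ‖b‖ * ‖c‖ + ‖a'‖ * ‖b - b'‖ * ‖c‖ + ‖a'‖ * ‖b'‖ * ‖c - c'‖ := by
      gcongr <;> exact norm_mul₃_le
    _ ≤ ‖a - a'‖ * M * M + M * ‖b - b'‖ * M + M * M * ‖c - c'‖ := by gcongr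
    _ = M ^ 2 * (‖a - a'‖ + ‖b - b'‖ + ‖c - c'‖) := by ring

lemma toyRHSZ_eq (x : ℤ → ℂ) (j : ℤ) :
    toyRHSZ x j = -Complex.I * (conj (x j) * x j * x j) + 2 * Complex.I *
      (conj (x j) * x (j - 1) * x (j - 1) + conj (x j) * x (j + 1) * x (j + 1)) := by
  rw [toyRHSZ, ← Complex.conj_mul']
  ring

lemma norm_toyRHSZ_sub_le {x y : ℤ → ℂ} {M : ℝ} (hx : ∀ k, ‖x k‖ ≤ M) (hy : ∀ k, ‖y k‖ ≤ M)
    (j : ℤ) : ‖toyRHSZ x j - toyRHSZ y j‖ ≤ 4 * M ^ 2 * ‖x (j - 1) - y (j - 1)‖ +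
      7 * M ^ 2 * ‖x j - y j‖ + 4 * M ^ 2 * ‖x (j + 1) - y (j + 1)‖ := by
  have hy' : ‖conj (y j)‖ ≤ M := (Complex.norm_conj _).trans_le (hy j)
  have hconj : ‖conj (x j) - conj (y j)‖ = ‖x j - y j‖ := by rw [← map_sub, Complex.norm_conj]
  have hmid := norm_mul_mul_sub_mul_mul_le (a := conj (x j)) (c := x j) (c' := y j)
    (hx j) (hx j) hy' (hy j)
  have hprev := norm_mul_mul_sub_mul_mul_le (a := conj (x j)) (c' := y (j - 1))
    (hx (j - 1)) (hx (j - 1)) hy' (hy (j - 1))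
  have hnext := norm_mul_mul_sub_mul_mul_le (a := conj (x j)) (c' := y (j + 1))
    (hx (j + 1)) (hx (j + 1)) hy' (hy (j + 1))
  rw [hconj] at hmid hprev hnext
  rw [toyRHSZ_eq, toyRHSZ_eq]
  set A := conj (x j) * x j * x j
  set B := conj (x j) * x (j - 1) * x (j - 1)
  set C := conj (x j) * x (j + 1) * x (j + 1)
  set A' := conj (y j) * y j * y j
  set B' := conj (y j) * y (j - 1) * y (j - 1)
  set C' := conj (y j) * y (j + 1) * y (j + 1)
  calc ‖-Complex.I * A + 2 * Complex.I * (B + C) - (-Complex.I * A' + 2 * Complex.I * (B' + C'))‖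
      = ‖-Complex.I * (A - A') + 2 * Complex.I * ((B - B') + (C - C'))‖ := by ring_nf
    _ ≤ ‖A - A'‖ + 2 * (‖B - B'‖ + ‖C - C'‖) := by
      refine (norm_add_le _ _).trans ?_
      simp only [norm_mul, norm_neg, Complex.norm_I, Complex.norm_ofNat, one_mul, mul_one]
      gcongr
      exact norm_add_le _ _
    _ ≤ _ := by linarith

lemma norm_toyRHSZ_le (x : ℓ²(ℤ, ℂ)) (j : ℤ) :
    ‖toyRHSZ x j‖ ≤ shiftMajorant (4 * ‖x‖ ^ 2) (7 * ‖x‖ ^ 2) (4 * ‖x‖ ^ 2) x j := by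
  have h := norm_toyRHSZ_sub_le (y := 0) (fun k ↦ lp.norm_apply_le_norm two_ne_zero x k)
    (fun _ ↦ by simp) j
  simpa [toyRHSZ, shiftMajorant_apply] using h

def toyF (x : ℓ²(ℤ, ℂ)) : ℓ²(ℤ, ℂ) :=
  ⟨toyRHSZ x, memℓp_of_norm_le_shiftMajorant (norm_toyRHSZ_le x)⟩

@[simp] lemma toyF_apply (x : ℓ²(ℤ, ℂ)) (j : ℤ) : toyF x j = toyRHSZ x j := rfl

lemma norm_toyF_le (x : ℓ²(ℤ, ℂ)) : ‖toyF x‖ ≤ 15 * ‖x‖ ^ 3 :=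
  (norm_le_of_norm_le_shiftMajorant (by positivity) (by positivity) (by positivity)
    (norm_toyRHSZ_le x)).trans_eq (by ring)

lemma norm_toyF_sub_le {x y : ℓ²(ℤ, ℂ)} {M : ℝ} (hx : ‖x‖ ≤ M) (hy : ‖y‖ ≤ M) :
    ‖toyF x - toyF y‖ ≤ 15 * M ^ 2 * ‖x - y‖ := by
  have hbound (j : ℤ) :
      ‖(toyF x - toyF y) j‖ ≤ shiftMajorant (4 * M ^ 2) (7 * M ^ 2) (4 * M ^ 2) (x - y) j := by
    simpa [shiftMajorant_apply] using norm_toyRHSZ_sub_le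
      (fun k ↦ (lp.norm_apply_le_norm two_ne_zero x k).trans hx)
      (fun k ↦ (lp.norm_apply_le_norm two_ne_zero y k).trans hy) j
  exact (norm_le_of_norm_le_shiftMajorant (by positivity) (by positivity) (by positivity)
    hbound).trans_eq (by ring)

lemma lipschitzOnWith_toyF (R : ℝ≥0) : LipschitzOnWith (15 * R ^ 2) toyF (closedBall 0 R) :=
  LipschitzOnWith.of_dist_le_mul fun x hx y hy ↦ by
    rw [dist_eq_norm, dist_eq_norm]
    push_cast
    exact norm_toyF_sub_le (by simpa using hx) (by simpa using hy)

lemma continuous_toyF : Continuous toyF :=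
  continuous_iff_continuousAt.2 fun x ↦ (lipschitzOnWith_toyF (‖x‖₊ + 1)).continuousOn.continuousAt
    (closedBall_mem_nhds_of_mem (by simp))

lemma isToyL2Sol_iff {b : ℝ → ℓ²(ℤ, ℂ)} : IsToyL2Sol b ↔ ∀ t, HasDerivAt b (toyF (b t)) t := by
  refine ⟨fun ⟨b', _, hderiv, hcoord⟩ t ↦ ?_, fun hb ↦ ⟨fun t ↦ toyF (b t), ?_, hb, fun _ _ ↦ rfl⟩⟩
  · have hb' : b' t = toyF (b t) := lp.ext (funext (hcoord t))
    exact hb' ▸ hderiv t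
  · exact continuous_toyF.comp (continuous_iff_continuousAt.2 fun t ↦ (hb t).continuousAt)

def toyFlux (x : ℤ → ℂ) (j : ℤ) : ℝ := 2 * (conj (x j) ^ 2 * x (j + 1) ^ 2).im

lemma re_toyRHSZ_mul_conj (x : ℤ → ℂ) (j : ℤ) :
    (toyRHSZ x j * conj (x j)).re = toyFlux x (j - 1) - toyFlux x j := by
  rw [toyRHSZ_eq, toyFlux, toyFlux, sub_add_cancel]
  simp only [Complex.mul_re, Complex.mul_im, Complex.add_re, Complex.add_im,
    Complex.neg_re, Complex.neg_im, Complex.I_re, Complex.I_im, Complex.conj_re,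
    Complex.conj_im, pow_two, Complex.re_ofNat, Complex.im_ofNat]
  ring

lemma summable_toyFlux (x : ℓ²(ℤ, ℂ)) : Summable (toyFlux x) := by
  have hsq : Summable fun j ↦ ‖x j‖ ^ 2 := by
    simpa using (lp.memℓp x).summable (by norm_num : 0 < (2 : ℝ≥0∞).toReal)
  refine Summable.of_norm_bounded (hsq.mul_left (2 * ‖x‖ ^ 2)) fun j ↦ ?_
  have hx := lp.norm_apply_le_norm two_ne_zero x (j + 1)
  calc ‖toyFlux x j‖ ≤ 2 * ‖conj (x j) ^ 2 * x (j + 1) ^ 2‖ := by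
        rw [toyFlux, norm_mul, Real.norm_two]
        gcongr
        exact Complex.abs_im_le_norm _
    _ = 2 * ‖x (j + 1)‖ ^ 2 * ‖x j‖ ^ 2 := by
        rw [norm_mul, norm_pow, norm_pow, Complex.norm_conj]
        ring
    _ ≤ 2 * ‖x‖ ^ 2 * ‖x j‖ ^ 2 := by gcongr

lemma Summable.hasSum_int_telescope {G : Type*} [AddCommGroup G] [TopologicalSpace G]
    [IsTopologicalAddGroup G] {f : ℤ → G} (hf : Summable f) :
    HasSum (fun j ↦ f (j - 1) - f j) 0 := by
  simpa using ((Equiv.subRight (1 : ℤ)).hasSum_iff.mpr hf.hasSum).sub hf.hasSum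

lemma re_inner_toyF (x : ℓ²(ℤ, ℂ)) : (inner ℂ x (toyF x)).re = 0 := by
  have hterm (j : ℤ) : (inner ℂ (x j) (toyF x j)).re = toyFlux x (j - 1) - toyFlux x j := by
    rw [toyF_apply, RCLike.inner_apply, re_toyRHSZ_mul_conj]
  have hsum := Complex.hasSum_re (lp.hasSum_inner x (toyF x))
  simp only [hterm] at hsum
  exact hsum.unique (summable_toyFlux x).hasSum_int_telescope

lemma re_inner_toyF_smul (c : ℝ) (x : ℓ²(ℤ, ℂ)) : (inner ℂ x (toyF (c • x))).re = 0 := by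
  rcases eq_or_ne c 0 with rfl | hc
  · have : toyF 0 = 0 := lp.ext (funext fun j ↦ by simp [toyRHSZ])
    simp [this]
  · have h := re_inner_toyF (c • x)
    rw [inner_smul_left_eq_smul, Complex.smul_re, smul_eq_mul] at h
    exact (mul_eq_zero.mp h).resolve_left hc

def truncatedToyF (R : ℝ≥0) (x : ℓ²(ℤ, ℂ)) : ℓ²(ℤ, ℂ) := toyF (radialRetraction R x)

section Truncation

variable {R : ℝ≥0}

lemma truncatedToyF_of_norm_le (hR : 0 < R) {x : ℓ²(ℤ, ℂ)} (hx : ‖x‖ ≤ R) :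
    truncatedToyF R x = toyF x := by
  rw [truncatedToyF, radialRetraction_of_norm_le (NNReal.coe_pos.mpr hR) hx]

lemma lipschitzWith_truncatedToyF (hR : 0 < R) :
    LipschitzWith (15 * R ^ 2 * 2) (truncatedToyF R) :=
  lipschitzOnWith_univ.mp <| (lipschitzOnWith_toyF R).comp
    (lipschitzWith_radialRetraction (NNReal.coe_pos.mpr hR)).lipschitzOnWith
    fun x _ ↦ by simpa using norm_radialRetraction_le (NNReal.coe_pos.mpr hR) x

lemma norm_truncatedToyF_le (hR : 0 < R) (x : ℓ²(ℤ, ℂ)) :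
    ‖truncatedToyF R x‖ ≤ (15 * R ^ 3 : ℝ≥0) := by
  push_cast
  exact (norm_toyF_le _).trans (by gcongr; exact norm_radialRetraction_le (NNReal.coe_pos.mpr hR) x)

lemma re_inner_truncatedToyF (R : ℝ≥0) (x : ℓ²(ℤ, ℂ)) :
    (inner ℂ x (truncatedToyF R x)).re = 0 :=
  re_inner_toyF_smul _ x

end Truncation

/-- Global well-posedness of the Toy Model System in `ℓ²(ℤ)`, with conservation of
the `ℓ²` norm. -/
theorem stmt6 (b0 : lp (fun _ : ℤ => ℂ) 2) :
    ∃ b : ℝ → lp (fun _ : ℤ => ℂ) 2,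
      (IsToyL2Sol b ∧ b 0 = b0) ∧
      (∀ t : ℝ, ‖b t‖ = ‖b0‖) ∧
      (∀ b₂ : ℝ → lp (fun _ : ℤ => ℂ) 2, IsToyL2Sol b₂ → b₂ 0 = b0 → b₂ = b) := by
  set R : ℝ≥0 := ‖b0‖₊ + 1
  have hR : 0 < R := by positivity
  have hb0R : ‖b0‖ ≤ R := by simp [R]
  obtain ⟨b, hb0, hb⟩ := exists_forall_hasDerivAt_of_lipschitzWith
    (lipschitzWith_truncatedToyF hR) (norm_truncatedToyF_le hR) b0
  have hb_norm (t : ℝ) : ‖b t‖ = ‖b0‖ := by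
    rw [norm_eq_of_forall_re_inner_eq_zero (𝕜 := ℂ) hb
      (fun s ↦ re_inner_truncatedToyF R (b s)) t, hb0]
  have hb_toy (t : ℝ) : HasDerivAt b (toyF (b t)) t := by
    rw [← truncatedToyF_of_norm_le hR ((hb_norm t).trans_le hb0R)]
    exact hb t
  refine ⟨b, ⟨isToyL2Sol_iff.2 hb_toy, hb0⟩, hb_norm, fun b₂ hb₂ hb₂0 ↦ ?_⟩
  rw [isToyL2Sol_iff] at hb₂
  have hb₂_norm (t : ℝ) : ‖b₂ t‖ = ‖b0‖ := by
    rw [norm_eq_of_forall_re_inner_eq_zero (𝕜 := ℂ) hb₂ (fun s ↦ re_inner_toyF (b₂ s)) t, hb₂0]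
  refine ODE_solution_unique_univ (v := fun _ ↦ truncatedToyF R) (s := fun _ ↦ univ) (t₀ := 0)
    (fun _ ↦ (lipschitzWith_truncatedToyF hR).lipschitzOnWith) (fun t ↦ ⟨?_, trivial⟩)
    (fun t ↦ ⟨hb t, trivial⟩) (hb₂0.trans hb0.symm)
  rw [truncatedToyF_of_norm_le hR ((hb₂_norm t).trans_le hb0R)]
  exact hb₂ t
end
end

section
/- Gronwall-type inequality, upper bounds: Let α, β, γ > 0, C₀ > 0, 0 < δ < 1 and T > 0. There exists a constant C (depending only on α, β, γ, C₀) with the following property. Let E₁, E₂ be normed real vector spaces, let x : [0,T] → E₁ and y : [0,T] → E₂ be differentiable, and let f, g : [0,T] → [0,∞) be continuous, with ‖x′(t)‖ ≤ C₀ ( δ e^{−αt} ‖x(t)‖ + δ ‖y(t)‖ + f(t) ) and ‖y′(t)‖ ≤ C₀ ( δ e^{−βt} ‖x(t)‖ + δ e^{−γt} ‖y(t)‖ + g(t) ) for all 0 ≤ t ≤ T. Then for all 0 ≤ t ≤ T: ‖x(t)‖ ≤ C ( (1+t) ‖x(0)‖ + t ‖y(0)‖ + ∫₀ᵗ ( (1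 + t e^{−βs}) f(s) + t g(s) ) ds ) and ‖y(t)‖ ≤ C ( ‖x(0)‖ + ‖y(0)‖ + ∫₀ᵗ ( e^{−βs} f(s) + g(s) ) ds ). -/
/-!
Norms of differentiable curves need not be differentiable, so the argument runs with upper right
Dini derivatives `D⁺`. Put `λ = C₀ / β` and `V(t) = λ e^{-βt} ‖x(t)‖ + ‖y(t)‖`. Then
`D⁺V ≤ k V + C₀ (1 + λ) (e^{-βt} f + g)` with `k = C₀ (e^{-αt} + λ e^{-βt} + e^{-γt})`:
differentiating the weight produces `-C₀ e^{-βt} ‖x‖`, which cancels the term `C₀ e^{-βt} ‖x‖` of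
the bound for `‖y'‖`. As `∫₀^∞ k < ∞`, Gronwall's inequality with variable coefficient bounds `V`,
hence `‖y‖`, independently of `T`. Feeding this into `‖x'‖ ≤ C₀ (e^{-αt} ‖x‖ + ‖y‖ + f)` and
applying Gronwall once more gives the linear growth of `‖x‖`. Since `δ < 1`, it suffices to treat
`δ = 1`.
-/

open Set Filter Real
open scoped Topology

def DiniUpperRightLE (f : ℝ → ℝ) (t a : ℝ) : Prop :=
  ∀ r, a < r → ∀ᶠ z in 𝓝[>] t, slope f t z < r

namespace DiniUpperRightLE

variable {f g : ℝ → ℝ} {t a b : ℝ}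

theorem mono (hf : DiniUpperRightLE f t a) (hab : a ≤ b) : DiniUpperRightLE f t b :=
  fun r hr => hf r (hab.trans_lt hr)

theorem add (hf : DiniUpperRightLE f t a) (hg : DiniUpperRightLE g t b) :
    DiniUpperRightLE (fun s => f s + g s) t (a + b) := by
  intro r hr
  filter_upwards [hf (a + (r - a - b) / 2) (by linarith),
    hg (b + (r - a - b) / 2) (by linarith)] with z hfz hgz
  rw [slope_def_field] at *
  rw [show (f z + g z - (f t + g t)) / (z - t) = (f z - f t) / (z - t) + (g z - g t) / (z - t)
    by ring]
  linarith

end DiniUpperRightLE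

section Norm

variable {E : Type*} [NormedAddCommGroup E] [NormedSpace ℝ E] {x : ℝ → E} {x' : E} {t : ℝ}

theorem HasDerivWithinAt.diniUpperRightLE_norm (hx : HasDerivWithinAt x x' (Ici t) t) :
    DiniUpperRightLE (fun s => ‖x s‖) t ‖x'‖ := by
  intro r hr
  filter_upwards [hx.Ioi_of_Ici.limsup_slope_norm_le hr, self_mem_nhdsWithin] with z hz htz
  rw [Real.norm_of_nonneg (sub_pos.2 htz).le, ← div_eq_inv_mul] at hz
  rwa [slope_def_field]

/-- Since `c ≥ 0`, the increment `c z * (‖x z‖ - ‖x t‖)` is at most `c z * ‖x z - x t‖`, and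
`‖slope x t z‖` has a genuine limit. -/
theorem HasDerivWithinAt.diniUpperRightLE_mul_norm {c : ℝ → ℝ} {c' : ℝ}
    (hx : HasDerivWithinAt x x' (Ici t) t) (hc : HasDerivWithinAt c c' (Ici t) t)
    (hc0 : ∀ᶠ z in 𝓝[>] t, 0 ≤ c z) :
    DiniUpperRightLE (fun s => c s * ‖x s‖) t (c' * ‖x t‖ + c t * ‖x'‖) := by
  intro r hr
  have hlim : Tendsto (fun z => c z * ‖slope x t z‖ + slope c t z * ‖x t‖) (𝓝[>] t)
      (𝓝 (c t * ‖x'‖ + c' * ‖x t‖)) := by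
    have hxs := (hasDerivWithinAt_iff_tendsto_slope' self_notMem_Ioi).1 hx.Ioi_of_Ici
    have hcs := (hasDerivWithinAt_iff_tendsto_slope' self_notMem_Ioi).1 hc.Ioi_of_Ici
    exact (hc.Ioi_of_Ici.continuousWithinAt.tendsto.mul hxs.norm).add
      (hcs.mul tendsto_const_nhds)
  filter_upwards [hlim.eventually_lt_const (by linarith), hc0, self_mem_nhdsWithin]
    with z hz hcz htz
  have hzt : 0 < z - t := sub_pos.2 htz
  have hnorm : ‖x z‖ - ‖x t‖ ≤ (z - t) * ‖slope x t z‖ := by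
    rw [slope_def_module, norm_smul, norm_inv, Real.norm_of_nonneg hzt.le,
      mul_inv_cancel_left₀ hzt.ne']
    exact norm_sub_norm_le _ _
  calc slope (fun s => c s * ‖x s‖) t z
      = c z * ((‖x z‖ - ‖x t‖) / (z - t)) + slope c t z * ‖x t‖ := by
        simp only [slope_def_field]; field_simp; ring
    _ ≤ c z * ‖slope x t z‖ + slope c t z * ‖x t‖ := by
        gcongr
        rwa [div_le_iff₀ hzt, mul_comm]
    _ < r := hz

end Norm

section Gronwall

theorem hasDerivAt_exp_integral_mul_add_integral {k φ : ℝ → ℝ} (hk : Continuous k)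
    (hφ : Continuous φ) (a c u : ℝ) :
    HasDerivAt
      (fun w => exp (∫ s in a..w, k s) * (c + ∫ s in a..w, exp (-∫ r in a..s, k r) * φ s))
      (k u * (exp (∫ s in a..u, k s) * (c + ∫ s in a..u, exp (-∫ r in a..s, k r) * φ s))
        + φ u) u := by
  have hKc := intervalIntegral.continuous_primitive
    (fun _ _ => hk.intervalIntegrable (μ := MeasureTheory.volume) _ _) a
  have hψ : Continuous fun s => exp (-∫ r in a..s, k r) * φ s := hKc.neg.rexp.mul hφ
  refine ((hk.integral_hasStrictDerivAt a u).hasDerivAt.exp.mul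
    ((hψ.integral_hasStrictDerivAt a u).hasDerivAt.const_add c)).congr_deriv ?_
  rw [← mul_assoc (exp _), ← exp_add, add_neg_cancel, exp_zero]
  ring

variable {v k h : ℝ → ℝ} {a b t : ℝ}

theorem le_exp_integral_mul_of_continuous (hv : ContinuousOn v (Icc a b)) (hk : Continuous k)
    (hh : Continuous h) (hk0 : ∀ s ∈ Icc a b, 0 ≤ k s) (hh0 : ∀ s ∈ Icc a b, 0 ≤ h s)
    (hv' : ∀ t ∈ Ico a b, DiniUpperRightLE v t (k t * v t + h t)) (ht : t ∈ Icc a b) :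
    v t ≤ exp (∫ s in a..t, k s) * (v a + ∫ s in a..t, h s) := by
  set K := fun u => ∫ s in a..u, k s
  set P := fun u => exp (K u) * (v a + ∫ s in a..u, exp (-K s) * h s)
  set Q := fun u => exp (K u) * (1 + ∫ s in a..u, exp (-K s) * 1)
  -- `P` solves `P' = k P + h` with `P a = v a`; adding `ε Q` makes the comparison strict.
  have hvPQ : ∀ ε > 0, v t ≤ P t + ε * Q t := fun ε hε =>
    image_le_of_liminf_slope_right_lt_deriv_boundary hv
      (fun u hu r hr => (hv' u hu r hr).frequently) (B := fun u => P u + ε * Q u)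
      (by simp [P, Q, K, hε.le])
      (fun u => ((hasDerivAt_exp_integral_mul_add_integral hk hh a (v a) u).add
          ((hasDerivAt_exp_integral_mul_add_integral (φ := fun _ => 1) hk continuous_const a 1
            u).const_mul ε)).congr_deriv rfl)
      (fun u _ hu => by rw [hu]; nlinarith) ht
  have hvP : v t ≤ P t := by
    have hlim : Tendsto (fun ε => P t + ε * Q t) (𝓝[>] 0) (𝓝 (P t)) := by
      have hc : Continuous fun ε : ℝ => P t + ε * Q t := by fun_prop
      convert (hc.tendsto 0).mono_left nhdsWithin_le_nhds using 2
      simp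
    exact ge_of_tendsto hlim (eventually_nhdsWithin_of_forall hvPQ)
  have hKc : Continuous K := intervalIntegral.continuous_primitive
    (fun _ _ => hk.intervalIntegrable (μ := MeasureTheory.volume) _ _) a
  have hweight : ∫ s in a..t, exp (-K s) * h s ≤ ∫ s in a..t, h s := by
    refine intervalIntegral.integral_mono_on ht.1 ((hKc.neg.rexp.mul hh).intervalIntegrable _ _)
      (hh.intervalIntegrable _ _) fun s hs => ?_
    have hK0 : 0 ≤ K s := intervalIntegral.integral_nonneg hs.1 fun r hr =>
      hk0 r ⟨hr.1, hr.2.trans (hs.2.trans ht.2)⟩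
    calc exp (-K s) * h s ≤ 1 * h s := by
          gcongr
          · exact hh0 s ⟨hs.1, hs.2.trans ht.2⟩
          · exact exp_le_one_iff.2 (by linarith)
      _ = h s := one_mul _
  calc v t ≤ P t := hvP
    _ ≤ exp (K t) * (v a + ∫ s in a..t, h s) := by
        show exp (K t) * _ ≤ _
        gcongr

theorem le_exp_integral_mul (hv : ContinuousOn v (Icc a b)) (hk : ContinuousOn k (Icc a b))
    (hh : ContinuousOn h (Icc a b)) (hk0 : ∀ s ∈ Icc a b, 0 ≤ k s)
    (hh0 : ∀ s ∈ Icc a b, 0 ≤ h s)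
    (hv' : ∀ t ∈ Ico a b, DiniUpperRightLE v t (k t * v t + h t)) (ht : t ∈ Icc a b) :
    v t ≤ exp (∫ s in a..t, k s) * (v a + ∫ s in a..t, h s) := by
  have hab : a ≤ b := ht.1.trans ht.2
  have hproj : ∀ s ∈ Icc a b, (projIcc a b hab s : ℝ) = s := fun s hs => by
    rw [projIcc_of_mem hab hs]
  have hext : ∀ {φ : ℝ → ℝ}, ContinuousOn φ (Icc a b) →
      Continuous (fun s => φ (projIcc a b hab s)) := fun hφ =>
    hφ.comp_continuous (continuous_subtype_val.comp continuous_projIcc)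
      fun s => (projIcc a b hab s).2
  have hcongr : ∀ φ : ℝ → ℝ, ∫ s in a..t, φ (projIcc a b hab s) = ∫ s in a..t, φ s :=
    fun φ => intervalIntegral.integral_congr fun s hs =>
      congrArg φ (hproj s (uIcc_subset_Icc (left_mem_Icc.2 hab) ht hs))
  have := le_exp_integral_mul_of_continuous hv (hext hk) (hext hh)
    (fun s hs => (hproj s hs).symm ▸ hk0 s hs) (fun s hs => (hproj s hs).symm ▸ hh0 s hs)
    (fun s hs => by simpa only [hproj s (Ico_subset_Icc_self hs)] using hv' s hs) ht
  rwa [hcongr, hcongr] at this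

end Gronwall

theorem integral_exp_neg_mul_le {c : ℝ} (hc : 0 < c) (t : ℝ) :
    ∫ s in (0 : ℝ)..t, exp (-c * s) ≤ 1 / c := by
  rw [intervalIntegral.integral_comp_mul_left (fun s => exp s) (neg_ne_zero.2 hc.ne'),
    integral_exp, smul_eq_mul, mul_zero, exp_zero, inv_neg, neg_mul, ← mul_neg, neg_sub,
    ← div_eq_inv_mul]
  gcongr
  linarith [exp_pos (-c * t)]

theorem intervalIntegral_nonneg_of_nonneg_on_Icc {φ : ℝ → ℝ} {T t : ℝ}
    (hφ : ∀ s ∈ Icc 0 T, 0 ≤ φ s) (ht : t ∈ Icc 0 T) : 0 ≤ ∫ s in (0 : ℝ)..t, φ s :=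
  intervalIntegral.integral_nonneg ht.1 fun s hs => hφ s ⟨hs.1, hs.2.trans ht.2⟩

theorem integral_le_mul_of_le_add_integral {u φ : ℝ → ℝ} {T A c t : ℝ}
    (hu : ContinuousOn u (Icc 0 T)) (hφ : ContinuousOn φ (Icc 0 T))
    (hφ0 : ∀ s ∈ Icc 0 T, 0 ≤ φ s) (hc : 0 ≤ c)
    (hle : ∀ s ∈ Icc 0 T, u s ≤ c * (A + ∫ r in (0 : ℝ)..s, φ r)) (ht : t ∈ Icc 0 T) :
    ∫ s in (0 : ℝ)..t, u s ≤ c * (t * (A + ∫ r in (0 : ℝ)..t, φ r)) := by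
  have hsub : uIcc 0 t ⊆ Icc 0 T := uIcc_subset_Icc (left_mem_Icc.2 (ht.1.trans ht.2)) ht
  have hbound : ∀ s ∈ Icc 0 t, u s ≤ c * (A + ∫ r in (0 : ℝ)..t, φ r) := fun s hs => by
    refine (hle s ⟨hs.1, hs.2.trans ht.2⟩).trans (mul_le_mul_of_nonneg_left ?_ hc)
    gcongr
    exact intervalIntegral.integral_mono_interval le_rfl hs.1 hs.2
      (MeasureTheory.ae_restrict_of_forall_mem measurableSet_Ioc fun r hr =>
        hφ0 r ⟨hr.1.le, hr.2.trans ht.2⟩) (hφ.mono hsub).intervalIntegrable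
  refine (intervalIntegral.integral_mono_on ht.1
    ((hu.mono hsub).intervalIntegrable (μ := MeasureTheory.volume))
    intervalIntegrable_const hbound).trans_eq ?_
  rw [intervalIntegral.integral_const, smul_eq_mul, sub_zero]
  ring

theorem integral_const_mul_exp_neg_add_le {α β γ C₀ l : ℝ} (hα : 0 < α) (hβ : 0 < β)
    (hγ : 0 < γ) (hC₀ : 0 ≤ C₀) (hl : 0 ≤ l) (t : ℝ) :
    ∫ s in (0 : ℝ)..t, C₀ * (exp (-α * s) + l * exp (-β * s) + exp (-γ * s)) ≤
      C₀ * (1 / α + l / β + 1 / γ) := by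
  have hint : ∀ c : ℝ, IntervalIntegrable (fun s => exp (c * s)) MeasureTheory.volume 0 t :=
    fun c => (by fun_prop : Continuous fun s => exp (c * s)).intervalIntegrable _ _
  rw [intervalIntegral.integral_const_mul, intervalIntegral.integral_add
    ((hint _).add ((hint _).const_mul _)) (hint _), intervalIntegral.integral_add (hint _)
    ((hint _).const_mul _), intervalIntegral.integral_const_mul, div_eq_mul_one_div l]
  gcongr
  · exact integral_exp_neg_mul_le hα t
  · exact integral_exp_neg_mul_le hβ t
  · exact integral_exp_neg_mul_le hγ t

section System

variable {α β γ C₀ T : ℝ} {E₁ E₂ : Type*} [NormedAddCommGroup E₁] [NormedSpace ℝ E₁]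
  [NormedAddCommGroup E₂] {x x' : ℝ → E₁} {y y' : ℝ → E₂} {f g : ℝ → ℝ}

theorem diniUpperRightLE_weighted_norm_add_norm [NormedSpace ℝ E₂] {l τ : ℝ} {u : E₁} {w : E₂}
    (hlβ : l * β = C₀) (hl : 0 ≤ l) (hC₀ : 0 ≤ C₀)
    (hx : HasDerivWithinAt x u (Ici τ) τ) (hy : HasDerivWithinAt y w (Ici τ) τ)
    (hu : ‖u‖ ≤ C₀ * (exp (-α * τ) * ‖x τ‖ + ‖y τ‖ + f τ))
    (hw : ‖w‖ ≤ C₀ * (exp (-β * τ) * ‖x τ‖ + exp (-γ * τ) * ‖y τ‖ + g τ))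
    (hf : 0 ≤ f τ) (hg : 0 ≤ g τ) :
    DiniUpperRightLE (fun s => l * exp (-β * s) * ‖x s‖ + ‖y s‖) τ
      (C₀ * (exp (-α * τ) + l * exp (-β * τ) + exp (-γ * τ)) *
          (l * exp (-β * τ) * ‖x τ‖ + ‖y τ‖) + C₀ * (1 + l) * (exp (-β * τ) * f τ + g τ)) := by
  have hweight : HasDerivAt (fun s => l * exp (-β * s)) (l * (exp (-β * τ) * (-β))) τ :=
    (((hasDerivAt_id τ).const_mul (-β)).exp.congr_deriv (by simp)).const_mul l
  refine ((hx.diniUpperRightLE_mul_norm hweight.hasDerivWithinAt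
    (Eventually.of_forall fun s => by positivity)).add hy.diniUpperRightLE_norm).mono ?_
  have hxu := mul_le_mul_of_nonneg_left hu (by positivity : 0 ≤ l * exp (-β * τ))
  have hrest : 0 ≤ C₀ * exp (-α * τ) * ‖y τ‖ + C₀ * (l * exp (-β * τ)) ^ 2 * ‖x τ‖
      + C₀ * exp (-γ * τ) * (l * exp (-β * τ)) * ‖x τ‖ + C₀ * exp (-β * τ) * f τ
      + C₀ * l * g τ := by positivity
  linear_combination hxu + hw + hrest - exp (-β * τ) * ‖x τ‖ * hlβ

theorem coupled_norm_snd_le [NormedSpace ℝ E₂] (hα : 0 < α) (hβ : 0 < β) (hγ : 0 < γ)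
    (hC₀ : 0 < C₀)
    (hf : ContinuousOn f (Icc 0 T)) (hg : ContinuousOn g (Icc 0 T))
    (hf0 : ∀ t ∈ Icc 0 T, 0 ≤ f t) (hg0 : ∀ t ∈ Icc 0 T, 0 ≤ g t)
    (hx : ∀ t ∈ Icc 0 T, HasDerivWithinAt x (x' t) (Icc 0 T) t)
    (hy : ∀ t ∈ Icc 0 T, HasDerivWithinAt y (y' t) (Icc 0 T) t)
    (hx' : ∀ t ∈ Icc 0 T, ‖x' t‖ ≤ C₀ * (exp (-α * t) * ‖x t‖ + ‖y t‖ + f t))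
    (hy' : ∀ t ∈ Icc 0 T,
      ‖y' t‖ ≤ C₀ * (exp (-β * t) * ‖x t‖ + exp (-γ * t) * ‖y t‖ + g t))
    {t : ℝ} (ht : t ∈ Icc 0 T) :
    ‖y t‖ ≤ exp (C₀ * (1 / α + C₀ / β / β + 1 / γ)) * (1 + C₀ / β) * (1 + C₀) *
      (‖x 0‖ + ‖y 0‖ + ∫ s in (0 : ℝ)..t, (exp (-β * s) * f s + g s)) := by
  set l := C₀ / β
  have hlβ : l * β = C₀ := div_mul_cancel₀ C₀ hβ.ne'
  have hl0 : 0 < l := div_pos hC₀ hβ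
  clear_value l
  have hxc : ContinuousOn x (Icc 0 T) := fun s hs => (hx s hs).continuousWithinAt
  have hyc : ContinuousOn y (Icc 0 T) := fun s hs => (hy s hs).continuousWithinAt
  have hgronwall := le_exp_integral_mul (by fun_prop) (by fun_prop) (by fun_prop)
    (fun s _ => by positivity) (fun s hs => by have := hf0 s hs; have := hg0 s hs; positivity)
    (fun τ hτ => diniUpperRightLE_weighted_norm_add_norm hlβ hl0.le hC₀.le
      ((hx τ (Ico_subset_Icc_self hτ)).mono_of_mem_nhdsWithin (Icc_mem_nhdsGE_of_mem hτ))
      ((hy τ (Ico_subset_Icc_self hτ)).mono_of_mem_nhdsWithin (Icc_mem_nhdsGE_of_mem hτ))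
      (hx' τ (Ico_subset_Icc_self hτ)) (hy' τ (Ico_subset_Icc_self hτ))
      (hf0 τ (Ico_subset_Icc_self hτ)) (hg0 τ (Ico_subset_Icc_self hτ))) ht
  have hI : 0 ≤ ∫ s in (0 : ℝ)..t, (exp (-β * s) * f s + g s) :=
    intervalIntegral_nonneg_of_nonneg_on_Icc
      (fun s hs => by have := hf0 s hs; have := hg0 s hs; positivity) ht
  have hx0 := norm_nonneg (x 0)
  have hy0 := norm_nonneg (y 0)
  calc ‖y t‖ ≤ l * exp (-β * t) * ‖x t‖ + ‖y t‖ := le_add_of_nonneg_left (by positivity)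
    _ ≤ _ := hgronwall
    _ ≤ exp (C₀ * (1 / α + l / β + 1 / γ)) * ((1 + l) * (1 + C₀) *
        (‖x 0‖ + ‖y 0‖ + ∫ s in (0 : ℝ)..t, (exp (-β * s) * f s + g s))) := by
      rw [intervalIntegral.integral_const_mul (C₀ * (1 + l)), mul_zero, exp_zero, mul_one]
      refine mul_le_mul (exp_le_exp.2 (integral_const_mul_exp_neg_add_le hα hβ hγ hC₀.le
        hl0.le t)) ?_ (by positivity) (by positivity)
      nlinarith [mul_nonneg hC₀.le hx0, mul_nonneg hC₀.le hy0, mul_nonneg hl0.le hI]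
    _ = _ := by ring

theorem norm_le_exp_mul_of_norm_deriv_le {u : ℝ → ℝ} (hα : 0 < α) (hC₀ : 0 < C₀)
    (hx : ∀ t ∈ Icc 0 T, HasDerivWithinAt x (x' t) (Icc 0 T) t)
    (hu : ContinuousOn u (Icc 0 T)) (hu0 : ∀ t ∈ Icc 0 T, 0 ≤ u t)
    (hx' : ∀ t ∈ Icc 0 T, ‖x' t‖ ≤ C₀ * (exp (-α * t) * ‖x t‖ + u t))
    {t : ℝ} (ht : t ∈ Icc 0 T) :
    ‖x t‖ ≤ exp (C₀ / α) * (‖x 0‖ + C₀ * ∫ s in (0 : ℝ)..t, u s) := by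
  have hxc : ContinuousOn x (Icc 0 T) := fun s hs => (hx s hs).continuousWithinAt
  have hgronwall := le_exp_integral_mul (v := fun s => ‖x s‖) (k := fun s => C₀ * exp (-α * s))
    (h := fun s => C₀ * u s) (by fun_prop) (by fun_prop) (by fun_prop)
    (fun s _ => by positivity) (fun s hs => by have := hu0 s hs; positivity)
    (fun τ hτ => ((hx τ (Ico_subset_Icc_self hτ)).mono_of_mem_nhdsWithin
      (Icc_mem_nhdsGE_of_mem hτ)).diniUpperRightLE_norm.mono
      ((hx' τ (Ico_subset_Icc_self hτ)).trans_eq (by ring))) ht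
  have hk : ∫ s in (0 : ℝ)..t, C₀ * exp (-α * s) ≤ C₀ / α := by
    rw [intervalIntegral.integral_const_mul, div_eq_mul_one_div]
    exact mul_le_mul_of_nonneg_left (integral_exp_neg_mul_le hα t) hC₀.le
  rw [intervalIntegral.integral_const_mul C₀ u] at hgronwall
  have := intervalIntegral_nonneg_of_nonneg_on_Icc hu0 ht
  exact hgronwall.trans (mul_le_mul_of_nonneg_right (exp_le_exp.2 hk) (by positivity))

theorem coupled_norm_fst_le (hα : 0 < α) (hC₀ : 0 < C₀)
    (hf : ContinuousOn f (Icc 0 T)) (hg : ContinuousOn g (Icc 0 T))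
    (hf0 : ∀ t ∈ Icc 0 T, 0 ≤ f t) (hg0 : ∀ t ∈ Icc 0 T, 0 ≤ g t)
    (hx : ∀ t ∈ Icc 0 T, HasDerivWithinAt x (x' t) (Icc 0 T) t) (hy : ContinuousOn y (Icc 0 T))
    (hx' : ∀ t ∈ Icc 0 T, ‖x' t‖ ≤ C₀ * (exp (-α * t) * ‖x t‖ + ‖y t‖ + f t))
    {c : ℝ} (hc : 0 ≤ c)
    (hy_le : ∀ t ∈ Icc 0 T,
      ‖y t‖ ≤ c * (‖x 0‖ + ‖y 0‖ + ∫ s in (0 : ℝ)..t, (exp (-β * s) * f s + g s)))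
    {t : ℝ} (ht : t ∈ Icc 0 T) :
    ‖x t‖ ≤ exp (C₀ / α) * (1 + C₀) * (1 + c) * ((1 + t) * ‖x 0‖ + t * ‖y 0‖ +
      ∫ s in (0 : ℝ)..t, ((1 + t * exp (-β * s)) * f s + t * g s)) := by
  have hsub : uIcc 0 t ⊆ Icc 0 T := uIcc_subset_Icc (left_mem_Icc.2 (ht.1.trans ht.2)) ht
  have hφ : ContinuousOn (fun s => exp (-β * s) * f s + g s) (Icc 0 T) := by fun_prop
  have hφ0 : ∀ s ∈ Icc 0 T, 0 ≤ exp (-β * s) * f s + g s := fun s hs => by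
    have := hf0 s hs; have := hg0 s hs; positivity
  have hfi : IntervalIntegrable f MeasureTheory.volume 0 t := (hf.mono hsub).intervalIntegrable
  have hxt := norm_le_exp_mul_of_norm_deriv_le (u := fun s => ‖y s‖ + f s) hα hC₀ hx
    (hy.norm.add hf)
    (fun s hs => add_nonneg (norm_nonneg _) (hf0 s hs))
    (fun s hs => (hx' s hs).trans_eq (by ring)) ht
  rw [intervalIntegral.integral_add ((hy.norm.mono hsub).intervalIntegrable) hfi] at hxt
  have hy_int := integral_le_mul_of_le_add_integral hy.norm hφ hφ0 hc hy_le ht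
  have hrhs : ∫ s in (0 : ℝ)..t, ((1 + t * exp (-β * s)) * f s + t * g s) =
      (∫ s in (0 : ℝ)..t, f s) + t * ∫ s in (0 : ℝ)..t, (exp (-β * s) * f s + g s) := by
    simp_rw [show ∀ s, (1 + t * exp (-β * s)) * f s + t * g s =
      f s + t * (exp (-β * s) * f s + g s) from fun s => by ring]
    rw [intervalIntegral.integral_add hfi ((hφ.mono hsub).intervalIntegrable.const_mul t),
      intervalIntegral.integral_const_mul]
  have hI := intervalIntegral_nonneg_of_nonneg_on_Icc hφ0 ht
  have hF := intervalIntegral_nonneg_of_nonneg_on_Icc hf0 ht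
  have hx0 := norm_nonneg (x 0)
  have hy0 := norm_nonneg (y 0)
  rw [hrhs, mul_assoc (exp _), mul_assoc (exp _)]
  refine hxt.trans (mul_le_mul_of_nonneg_left ?_ (exp_pos _).le)
  have htΦ : 0 ≤ t * (‖x 0‖ + ‖y 0‖ + ∫ s in (0 : ℝ)..t, (exp (-β * s) * f s + g s)) := by
    have := ht.1; positivity
  nlinarith [mul_le_mul_of_nonneg_left hy_int hC₀.le, mul_nonneg hC₀.le hc,
    mul_nonneg (mul_nonneg hC₀.le hc) htΦ, mul_nonneg (mul_nonneg hC₀.le hc) hx0,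
    mul_nonneg (mul_nonneg hC₀.le hc) hF, mul_nonneg hc htΦ, mul_nonneg hc hx0, mul_nonneg hc hF,
    mul_nonneg hC₀.le htΦ, mul_nonneg hC₀.le hx0]

end System

universe u v

/-- Gronwall-type inequality (upper bounds): if `‖x′‖ ≲ δe^{−αt}‖x‖ + δ‖y‖ + f` and
`‖y′‖ ≲ δe^{−βt}‖x‖ + δe^{−γt}‖y‖ + g` on `[0,T]`, then `x` grows at most linearly
(in terms of the data) and `y` stays bounded, with a constant depending only on
`α, β, γ, C₀`. -/
theorem stmt14 (α β γ C₀ : ℝ) (hα : 0 < α) (hβ : 0 < β) (hγ : 0 < γ) (hC₀ : 0 < C₀) :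
    ∃ C : ℝ, 0 < C ∧
      ∀ (δ T : ℝ), 0 < δ → δ < 1 → 0 < T →
      ∀ (E₁ : Type u) (E₂ : Type v)
        [NormedAddCommGroup E₁] [NormedSpace ℝ E₁]
        [NormedAddCommGroup E₂] [NormedSpace ℝ E₂],
      ∀ (x x' : ℝ → E₁) (y y' : ℝ → E₂) (f g : ℝ → ℝ),
        ContinuousOn f (Set.Icc 0 T) → ContinuousOn g (Set.Icc 0 T) →
        (∀ t ∈ Set.Icc (0:ℝ) T, 0 ≤ f t) → (∀ t ∈ Set.Icc (0:ℝ) T, 0 ≤ g t) →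
        (∀ t ∈ Set.Icc (0:ℝ) T, HasDerivWithinAt x (x' t) (Set.Icc 0 T) t) →
        (∀ t ∈ Set.Icc (0:ℝ) T, HasDerivWithinAt y (y' t) (Set.Icc 0 T) t) →
        (∀ t ∈ Set.Icc (0:ℝ) T,
          ‖x' t‖ ≤ C₀ * (δ * Real.exp (-α * t) * ‖x t‖ + δ * ‖y t‖ + f t)) →
        (∀ t ∈ Set.Icc (0:ℝ) T,
          ‖y' t‖ ≤ C₀ * (δ * Real.exp (-β * t) * ‖x t‖ +
            δ * Real.exp (-γ * t) * ‖y t‖ + g t)) →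
        ∀ t ∈ Set.Icc (0:ℝ) T,
          ‖x t‖ ≤ C * ((1 + t) * ‖x 0‖ + t * ‖y 0‖ +
            ∫ s in (0:ℝ)..t, ((1 + t * Real.exp (-β * s)) * f s + t * g s)) ∧
          ‖y t‖ ≤ C * (‖x 0‖ + ‖y 0‖ +
            ∫ s in (0:ℝ)..t, (Real.exp (-β * s) * f s + g s)) := by
  set c₁ := exp (C₀ * (1 / α + C₀ / β / β + 1 / γ)) * (1 + C₀ / β) * (1 + C₀)
  refine ⟨c₁ + exp (C₀ / α) * (1 + C₀) * (1 + c₁), by positivity, ?_⟩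
  intro δ T _ hδ1 _ E₁ E₂ _ _ _ _ x x' y y' f g hf hg hf0 hg0 hx hy hx' hy' t ht
  have hx'₁ : ∀ t ∈ Icc 0 T, ‖x' t‖ ≤ C₀ * (exp (-α * t) * ‖x t‖ + ‖y t‖ + f t) := fun s hs =>
    (hx' s hs).trans (by gcongr <;> exact mul_le_of_le_one_left (by positivity) hδ1.le)
  have hy'₁ : ∀ t ∈ Icc 0 T,
      ‖y' t‖ ≤ C₀ * (exp (-β * t) * ‖x t‖ + exp (-γ * t) * ‖y t‖ + g t) := fun s hs =>
    (hy' s hs).trans (by gcongr <;> exact mul_le_of_le_one_left (by positivity) hδ1.le)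
  have hY : ∀ s ∈ Icc 0 T, ‖y s‖ ≤ c₁ *
      (‖x 0‖ + ‖y 0‖ + ∫ r in (0 : ℝ)..s, (exp (-β * r) * f r + g r)) := fun s hs =>
    coupled_norm_snd_le hα hβ hγ hC₀ hf hg hf0 hg0 hx hy hx'₁ hy'₁ hs
  have hX := coupled_norm_fst_le hα hC₀ hf hg hf0 hg0 hx
    (fun s hs => (hy s hs).continuousWithinAt) hx'₁ (by positivity) hY ht
  have hIx := intervalIntegral_nonneg_of_nonneg_on_Icc (φ := fun s =>
    (1 + t * exp (-β * s)) * f s + t * g s) (fun s hs => by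
      have := hf0 s hs; have := hg0 s hs; have := ht.1; positivity) ht
  have hIy := intervalIntegral_nonneg_of_nonneg_on_Icc (φ := fun s => exp (-β * s) * f s + g s)
    (fun s hs => by have := hf0 s hs; have := hg0 s hs; positivity) ht
  have := ht.1
  exact ⟨hX.trans (mul_le_mul_of_nonneg_right (le_add_of_nonneg_left (by positivity))
      (by positivity)),
    (hY t ht).trans (mul_le_mul_of_nonneg_right (le_add_of_nonneg_right (by positivity))
      (by positivity))⟩
end

section
/- Gronwall-type inequality, lower bound: Let α, β, γ > 0 and C₀ > 0. There exist δ₀ > 0 and a constant C (depending only on α, β, γ, C₀) with the following property. Let 0 < δ ≤ δ₀, T > 0, let E₁, E₂ be normed real vector spaces, and let x : [0,T] → E₁, y : [0,T] → E₂ be differentiable with ‖x′(t)‖ ≤ C₀ ( δ e^{−αt} ‖x(t)‖ + δ ‖y(t)‖ ) and ‖y′(t)‖ ≤ C₀ ( δ e^{−βt} ‖x(t)‖ + δ e^{−γt} ‖y(t)‖ ) for all 0 ≤ t ≤ T. Then ‖y(t)‖ ≥ (1/2) ‖y(0)‖ − C ‖x(0)‖ for all 0 ≤ t ≤ T. -/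
/-!
With `K = 2 C₀ δ`, the pair `(x, y)` satisfies `‖(x, y)′‖ ≤ K ‖(x, y)‖`, so by Grönwall it grows
at most like `‖(x 0, y 0)‖ e^{K t}`. Feeding this into the equation for `y` gives
`‖y′(t)‖ ≤ K ‖(x 0, y 0)‖ e^{-μ t}` as soon as `K + μ ≤ min β γ`: the decay of the coefficients
beats the growth. Integrating, `y` drifts by at most `K ‖(x 0, y 0)‖ / μ`, which is at most
`(‖x 0‖ + ‖y 0‖) / 2` once `δ ≤ μ / (4 C₀)`.
-/

universe u v

open Set Real

section Interval

variable {E : Type*} [NormedAddCommGroup E] [NormedSpace ℝ E] {f f' : ℝ → E} {a b : ℝ}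

theorem hasDerivWithinAt_Ici_of_Icc (hf : ∀ t ∈ Icc a b, HasDerivWithinAt f (f' t) (Icc a b) t) :
    ∀ t ∈ Ico a b, HasDerivWithinAt f (f' t) (Ici t) t := fun t ht =>
  (hf t (Ico_subset_Icc_self ht)).mono_of_mem_nhdsWithin (Icc_mem_nhdsGE_of_mem ht)

theorem norm_le_norm_mul_exp_of_norm_deriv_le {K : ℝ}
    (hf : ∀ t ∈ Icc a b, HasDerivWithinAt f (f' t) (Icc a b) t)
    (bound : ∀ t ∈ Icc a b, ‖f' t‖ ≤ K * ‖f t‖) :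
    ∀ t ∈ Icc a b, ‖f t‖ ≤ ‖f a‖ * exp (K * (t - a)) := fun t ht => by
  simpa only [gronwallBound_ε0] using
    norm_le_gronwallBound_of_norm_deriv_right_le (fun s hs => (hf s hs).continuousWithinAt)
      (hasDerivWithinAt_Ici_of_Icc hf) le_rfl
      (fun s hs => (bound s (Ico_subset_Icc_self hs)).trans_eq (add_zero _).symm) t ht

theorem norm_sub_le_of_norm_deriv_le_mul_exp {L μ : ℝ} (hμ : 0 < μ)
    (hf : ∀ t ∈ Icc a b, HasDerivWithinAt f (f' t) (Icc a b) t)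
    (bound : ∀ t ∈ Icc a b, ‖f' t‖ ≤ L * exp (-μ * (t - a))) :
    ∀ t ∈ Icc a b, ‖f t - f a‖ ≤ L / μ := by
  intro t ht
  have hL : 0 ≤ L := by
    simpa using (norm_nonneg _).trans (bound a (left_mem_Icc.2 (ht.1.trans ht.2)))
  have hB (r : ℝ) : HasDerivAt (fun r => L / μ * (1 - exp (-μ * (r - a))))
      (L * exp (-μ * (r - a))) r := by
    refine (((((hasDerivAt_id r).sub_const a).const_mul (-μ)).exp.const_sub 1).const_mul
      (L / μ)).congr_deriv ?_
    field_simp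
    simp
  calc ‖f t - f a‖ ≤ L / μ * (1 - exp (-μ * (t - a))) :=
        image_norm_le_of_norm_deriv_right_le_deriv_boundary
          (fun s hs => (hf s hs).continuousWithinAt.sub continuousWithinAt_const)
          (fun s hs => (hasDerivWithinAt_Ici_of_Icc hf s hs).sub_const (f a)) (by simp) hB
          (fun s hs => bound s (Ico_subset_Icc_self hs)) ht
    _ ≤ L / μ := mul_le_of_le_one_right (by positivity) (by simp [exp_nonneg])

end Interval

section System

variable {E₁ E₂ : Type*} [NormedAddCommGroup E₁] [NormedSpace ℝ E₁]
  [NormedAddCommGroup E₂] [NormedSpace ℝ E₂] {x x' : ℝ → E₁} {y y' : ℝ → E₂} {α β γ C₀ δ T : ℝ}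

theorem norm_prod_le_mul_exp (hα : 0 ≤ α) (hβ : 0 ≤ β) (hγ : 0 ≤ γ) (hC₀ : 0 ≤ C₀) (hδ : 0 ≤ δ)
    (hx : ∀ t ∈ Icc 0 T, HasDerivWithinAt x (x' t) (Icc 0 T) t)
    (hy : ∀ t ∈ Icc 0 T, HasDerivWithinAt y (y' t) (Icc 0 T) t)
    (hx' : ∀ t ∈ Icc 0 T, ‖x' t‖ ≤ C₀ * (δ * exp (-α * t) * ‖x t‖ + δ * ‖y t‖))
    (hy' : ∀ t ∈ Icc 0 T,
      ‖y' t‖ ≤ C₀ * (δ * exp (-β * t) * ‖x t‖ + δ * exp (-γ * t) * ‖y t‖)) :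
    ∀ t ∈ Icc 0 T, ‖(x t, y t)‖ ≤ ‖(x 0, y 0)‖ * exp (2 * C₀ * δ * t) := by
  have bound : ∀ t ∈ Icc 0 T, ‖(x' t, y' t)‖ ≤ 2 * C₀ * δ * ‖(x t, y t)‖ := by
    intro t ht
    have hexp {κ : ℝ} (hκ : 0 ≤ κ) : exp (-κ * t) ≤ 1 :=
      exp_le_one_iff.2 (by nlinarith [ht.1])
    have hxn : ‖x t‖ ≤ ‖(x t, y t)‖ := norm_fst_le (x t, y t)
    have hyn : ‖y t‖ ≤ ‖(x t, y t)‖ := norm_snd_le (x t, y t)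
    refine max_le ?_ ?_
    · calc ‖x' t‖ ≤ C₀ * (δ * exp (-α * t) * ‖x t‖ + δ * ‖y t‖) := hx' t ht
        _ ≤ C₀ * (δ * 1 * ‖(x t, y t)‖ + δ * ‖(x t, y t)‖) := by gcongr; exact hexp hα
        _ = 2 * C₀ * δ * ‖(x t, y t)‖ := by ring
    · calc ‖y' t‖ ≤ C₀ * (δ * exp (-β * t) * ‖x t‖ + δ * exp (-γ * t) * ‖y t‖) := hy' t ht
        _ ≤ C₀ * (δ * 1 * ‖(x t, y t)‖ + δ * 1 * ‖(x t, y t)‖) := by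
          gcongr
          exacts [hexp hβ, hexp hγ]
        _ = 2 * C₀ * δ * ‖(x t, y t)‖ := by ring
  simpa only [sub_zero] using norm_le_norm_mul_exp_of_norm_deriv_le
    (fun t ht => (hx t ht).prodMk (hy t ht)) bound

theorem norm_deriv_snd_le_mul_exp {μ : ℝ} (hα : 0 ≤ α) (hμ : 0 ≤ μ)
    (hβ : 2 * C₀ * δ + μ ≤ β) (hγ : 2 * C₀ * δ + μ ≤ γ) (hC₀ : 0 ≤ C₀) (hδ : 0 ≤ δ)
    (hx : ∀ t ∈ Icc 0 T, HasDerivWithinAt x (x' t) (Icc 0 T) t)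
    (hy : ∀ t ∈ Icc 0 T, HasDerivWithinAt y (y' t) (Icc 0 T) t)
    (hx' : ∀ t ∈ Icc 0 T, ‖x' t‖ ≤ C₀ * (δ * exp (-α * t) * ‖x t‖ + δ * ‖y t‖))
    (hy' : ∀ t ∈ Icc 0 T,
      ‖y' t‖ ≤ C₀ * (δ * exp (-β * t) * ‖x t‖ + δ * exp (-γ * t) * ‖y t‖)) :
    ∀ t ∈ Icc 0 T, ‖y' t‖ ≤ 2 * C₀ * δ * ‖(x 0, y 0)‖ * exp (-μ * t) := by
  intro t ht
  set M := ‖(x 0, y 0)‖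
  have hgrowth := norm_prod_le_mul_exp hα (by linarith [mul_nonneg hC₀ hδ])
    (by linarith [mul_nonneg hC₀ hδ]) hC₀ hδ hx hy hx' hy' t ht
  have hxn : ‖x t‖ ≤ M * exp (2 * C₀ * δ * t) := (norm_fst_le (x t, y t)).trans hgrowth
  have hyn : ‖y t‖ ≤ M * exp (2 * C₀ * δ * t) := (norm_snd_le (x t, y t)).trans hgrowth
  have hdecay {κ : ℝ} (hκ : 2 * C₀ * δ + μ ≤ κ) :
      exp (-κ * t) * exp (2 * C₀ * δ * t) ≤ exp (-μ * t) := by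
    rw [← exp_add]
    exact exp_le_exp.2 (by nlinarith [ht.1])
  calc ‖y' t‖ ≤ C₀ * (δ * exp (-β * t) * ‖x t‖ + δ * exp (-γ * t) * ‖y t‖) := hy' t ht
    _ ≤ C₀ * (δ * exp (-β * t) * (M * exp (2 * C₀ * δ * t))
          + δ * exp (-γ * t) * (M * exp (2 * C₀ * δ * t))) := by gcongr
    _ = C₀ * δ * M * (exp (-β * t) * exp (2 * C₀ * δ * t))
          + C₀ * δ * M * (exp (-γ * t) * exp (2 * C₀ * δ * t)) := by ring
    _ ≤ C₀ * δ * M * exp (-μ * t) + C₀ * δ * M * exp (-μ * t) := by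
      gcongr
      exacts [hdecay hβ, hdecay hγ]
    _ = 2 * C₀ * δ * M * exp (-μ * t) := by ring

end System

/-- Gronwall-type inequality (lower bound): with no forcing terms and `δ` sufficiently
small (depending on `α, β, γ, C₀`), one has `‖y(t)‖ ≥ (1/2)‖y(0)‖ − C‖x(0)‖`. -/
theorem stmt15 (α β γ C₀ : ℝ) (hα : 0 < α) (hβ : 0 < β) (hγ : 0 < γ) (hC₀ : 0 < C₀) :
    ∃ δ₀ C : ℝ, 0 < δ₀ ∧ 0 < C ∧
      ∀ (δ T : ℝ), 0 < δ → δ ≤ δ₀ → 0 < T →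
      ∀ (E₁ : Type u) (E₂ : Type v)
        [NormedAddCommGroup E₁] [NormedSpace ℝ E₁]
        [NormedAddCommGroup E₂] [NormedSpace ℝ E₂],
      ∀ (x x' : ℝ → E₁) (y y' : ℝ → E₂),
        (∀ t ∈ Set.Icc (0:ℝ) T, HasDerivWithinAt x (x' t) (Set.Icc 0 T) t) →
        (∀ t ∈ Set.Icc (0:ℝ) T, HasDerivWithinAt y (y' t) (Set.Icc 0 T) t) →
        (∀ t ∈ Set.Icc (0:ℝ) T,
          ‖x' t‖ ≤ C₀ * (δ * Real.exp (-α * t) * ‖x t‖ + δ * ‖y t‖)) →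
        (∀ t ∈ Set.Icc (0:ℝ) T,
          ‖y' t‖ ≤ C₀ * (δ * Real.exp (-β * t) * ‖x t‖ + δ * Real.exp (-γ * t) * ‖y t‖)) →
        ∀ t ∈ Set.Icc (0:ℝ) T, (1/2 : ℝ) * ‖y 0‖ - C * ‖x 0‖ ≤ ‖y t‖ := by
  obtain ⟨μ, hμ, hμβ, hμγ⟩ : ∃ μ, 0 < μ ∧ 2 * μ ≤ β ∧ 2 * μ ≤ γ :=
    ⟨min β γ / 2, by positivity, by linarith [min_le_left β γ], by linarith [min_le_right β γ]⟩
  refine ⟨μ / (4 * C₀), 1 / 2, by positivity, by norm_num, ?_⟩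
  intro δ T hδ hδ₀ _ E₁ E₂ _ _ _ _ x x' y y' hx hy hx' hy' t ht
  have hδμ : 4 * C₀ * δ ≤ μ := by rwa [le_div_iff₀ (by positivity), mul_comm] at hδ₀
  set M := ‖(x 0, y 0)‖
  have hy'_decay := norm_deriv_snd_le_mul_exp hα.le hμ.le (by linarith) (by linarith) hC₀.le hδ.le
    hx hy hx' hy'
  have hdrift : ‖y t - y 0‖ ≤ 2 * C₀ * δ * M / μ :=
    norm_sub_le_of_norm_deriv_le_mul_exp hμ hy (by simpa only [sub_zero] using hy'_decay) t ht
  have hdrift_le : 2 * C₀ * δ * M / μ ≤ M / 2 := by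
    rw [div_le_div_iff₀ hμ two_pos]
    nlinarith [norm_nonneg (x 0, y 0)]
  have hM : M ≤ ‖x 0‖ + ‖y 0‖ := max_le_add_of_nonneg (norm_nonneg _) (norm_nonneg _)
  linarith [norm_sub_norm_le (y 0) (y t), norm_sub_rev (y t) (y 0)]
end
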